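/- arXiv:q-alg/9706012 — 2 statements merged into one kernel-verified Lean document; each statement's English description precedes it below -/
import Mathlib

section
/- Let V be a vertex operator algebra and W₁, W₂ V-modules, and let F(·,x): G(W₁,W₂) → (Hom(W₁,W₂)){x} be defined by F(Φ,x)u₁ = Φ(x)u₁. Then: (a) for any V-module M and any intertwining operator I(·,x) of type (W₂; M W₁), there exists a unique V-homomorphism f: M → G(W₁,W₂) such that I(u,x) = F(f(u),x) for all u ∈ M; (b) for any V-module M, the space Hom_V(M, G(W₁,W₂)) is naturally linearly isomorphic to the space I(W₂; M W₁) of intertwining operators of type (W₂; M W₁), via f ↦ F(f(·),x). -/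
noncomputable section

open Finsupp TensorProduct

noncomputable instance : DecidableEq ℂ := Classical.decEq ℂ

/-- Generalized binomial coefficient `binom(m, i)` for `m : ℤ`, `i : ℕ`. -/
def zbinom (m : ℤ) (i : ℕ) : ℂ :=
  ((descPochhammer ℂ i).eval (m : ℂ)) / (i.factorial : ℂ)

/-- A vertex algebra over `ℂ`, encoded through the coefficient operators `Y a n = aₙ`
(so that `Y(a,x) = ∑ₙ (Y a n) x^{-n-1}`).  The Jacobi identity is encoded in its
equivalent component (Borcherds identity) form. -/
structure VertexAlg (V : Type) [AddCommGroup V] [Module ℂ V] where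
  Y : V →ₗ[ℂ] ℤ → Module.End ℂ V
  one : V
  vacuum : ∀ n : ℤ, Y one n = if n = -1 then 1 else 0
  creation_pos : ∀ (a : V) (n : ℤ), 0 ≤ n → Y a n one = 0
  creation : ∀ a : V, Y a (-1) one = a
  trunc : ∀ a b : V, ∃ N : ℤ, ∀ n : ℤ, N ≤ n → Y a n b = 0
  jacobi : ∀ (a b c : V) (p q r : ℤ),
    (∑ᶠ i : ℕ, zbinom p i • Y (Y a (r + i) b) (p + q - i) c) =
      ∑ᶠ i : ℕ, ((-1 : ℂ) ^ i * zbinom r i) •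
        (Y a (p + r - i) (Y b (q + i) c)
          - ((-1 : ℂ) ^ r) • Y b (q + r - i) (Y a (p + i) c))

variable (V : Type) [AddCommGroup V] [Module ℂ V]

/-- The axioms for a module over a vertex algebra, for the data of coefficient
operators `YM a n` on `M`. -/
def VAModAx (va : VertexAlg V) (M : Type) [AddCommGroup M] [Module ℂ M]
    (YM : V →ₗ[ℂ] ℤ → Module.End ℂ M) : Prop :=
  (∀ n : ℤ, YM va.one n = if n = -1 then 1 else 0) ∧
  (∀ (a : V) (u : M), ∃ N : ℤ, ∀ n : ℤ, N ≤ n → YM a n u = 0) ∧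
  ∀ (a b : V) (u : M) (p q r : ℤ),
    (∑ᶠ i : ℕ, zbinom p i • YM (va.Y a (r + i) b) (p + q - i) u) =
      ∑ᶠ i : ℕ, ((-1 : ℂ) ^ i * zbinom r i) •
        (YM a (p + r - i) (YM b (q + i) u)
          - ((-1 : ℂ) ^ r) • YM b (q + r - i) (YM a (p + i) u))

/-- The operator `d : a ↦ a₋₂𝟏` of a vertex algebra. -/
def dmap (va : VertexAlg V) (a : V) : V := va.Y a (-2) va.one

/-- `d̂(tᵐ ⊗ a) = m tᵐ⁻¹ ⊗ a + tᵐ ⊗ d(a)` on `ℂ[t,t⁻¹] ⊗ V = (ℤ →₀ V)`. -/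
def dhatGen (va : VertexAlg V) (m : ℤ) (a : V) : ℤ →₀ V :=
  (m : ℂ) • Finsupp.single (m - 1) a + Finsupp.single m (dmap V va a)

/-- The image of the operator `d̂ = d/dt ⊗ 1 + 1 ⊗ d` on `ℂ[t,t⁻¹] ⊗ V`. -/
def dhatSpan (va : VertexAlg V) : Submodule ℂ (ℤ →₀ V) :=
  Submodule.span ℂ {x | ∃ (m : ℤ) (a : V), x = dhatGen V va m a}

/-- The underlying space of the Lie algebra `g(V) = (ℂ[t,t⁻¹] ⊗ V)/Im d̂`. -/
abbrev gVSp (va : VertexAlg V) := (ℤ →₀ V) ⧸ dhatSpan V va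

/-- The image of `tᵐ ⊗ a` in `g(V)`. -/
def gvMk (va : VertexAlg V) (m : ℤ) (a : V) : gVSp V va :=
  Submodule.Quotient.mk (Finsupp.single m a)

/-- A representation of the Lie algebra `g(V)` on `X`: a linear map on `ℂ[t,t⁻¹] ⊗ V`
vanishing on `Im d̂` (hence factoring through `g(V)`) and satisfying the
commutator formula `[a(m), b(n)] = ∑ᵢ binom(m,i) (aᵢb)(m+n-i)`. -/
structure IsGVRep (va : VertexAlg V) {X : Type} [AddCommGroup X] [Module ℂ X]
    (ρ : (ℤ →₀ V) →ₗ[ℂ] Module.End ℂ X) : Prop where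
  ann : ∀ x ∈ dhatSpan V va, ρ x = 0
  comm : ∀ (a b : V) (m n : ℤ),
    ρ (Finsupp.single m a) * ρ (Finsupp.single n b)
        - ρ (Finsupp.single n b) * ρ (Finsupp.single m a)
      = ∑ᶠ i : ℕ, zbinom m i • ρ (Finsupp.single (m + n - i) (va.Y a i b))

/-- A `g(V)`-action is restricted if `a(n)x = 0` for `n` sufficiently large. -/
def GVRestricted (va : VertexAlg V) {X : Type} [AddCommGroup X] [Module ℂ X]
    (ρ : (ℤ →₀ V) →ₗ[ℂ] Module.End ℂ X) : Prop :=
  ∀ (a : V) (x : X), ∃ N : ℤ, ∀ n : ℤ, N ≤ n → ρ (Finsupp.single n a) x = 0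
/-- A vertex operator algebra over `ℂ`: a vertex algebra together with a
`ℤ`-grading into finite dimensional pieces, lower truncated, and a conformal
vector `ω` whose modes `L(n) = ω_{n+1}` satisfy the Virasoro relations, the
`L(-1)`-derivative property and act diagonally according to the grading. -/
structure VOA (V : Type) [AddCommGroup V] [Module ℂ V] extends VertexAlg V where
  grading : ℤ → Submodule ℂ V
  internal : DirectSum.IsInternal grading
  fd : ∀ n : ℤ, FiniteDimensional ℂ (grading n)
  lower_trunc : ∃ N : ℤ, ∀ n : ℤ, n ≤ N → grading n = ⊥
  ω : V
  cc : ℂ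
  virasoro : ∀ m n : ℤ,
    Y ω (m + 1) * Y ω (n + 1) - Y ω (n + 1) * Y ω (m + 1)
      = ((m : ℂ) - (n : ℂ)) • Y ω (m + n + 1)
        + (if m + n = 0 then (((m : ℂ) ^ 3 - (m : ℂ)) / 12) * cc else 0)
            • (1 : Module.End ℂ V)
  derivY : ∀ (a : V) (n : ℤ), Y (Y ω 0 a) n = (-(n : ℂ)) • Y a (n - 1)
  L0_diag : ∀ (n : ℤ) (a : V), a ∈ grading n → Y ω 1 a = (n : ℂ) • a
  omega_wt : ω ∈ grading 2

variable {V} in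
/-- The axioms for a weak module over a vertex operator algebra, for the data of
coefficient operators `YM a n` on `M`. -/
def WeakAxioms (vo : VOA V) (M : Type) [AddCommGroup M] [Module ℂ M]
    (YM : V →ₗ[ℂ] ℤ → Module.End ℂ M) : Prop :=
  (∀ n : ℤ, YM vo.one n = if n = -1 then 1 else 0) ∧
  (∀ (a : V) (n : ℤ), YM (vo.Y vo.ω 0 a) n = (-(n : ℂ)) • YM a (n - 1)) ∧
  (∀ (a : V) (u : M), ∃ N : ℤ, ∀ n : ℤ, N ≤ n → YM a n u = 0) ∧
  ∀ (a b : V) (u : M) (p q r : ℤ),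
    (∑ᶠ i : ℕ, zbinom p i • YM (vo.Y a (r + i) b) (p + q - i) u) =
      ∑ᶠ i : ℕ, ((-1 : ℂ) ^ i * zbinom r i) •
        (YM a (p + r - i) (YM b (q + i) u)
          - ((-1 : ℂ) ^ r) • YM b (q + r - i) (YM a (p + i) u))

/-- A weak module over a vertex operator algebra (bundled). -/
structure WeakMod (vo : VOA V) where
  carrier : Type
  [ab : AddCommGroup carrier]
  [md : Module ℂ carrier]
  YM : V →ₗ[ℂ] ℤ → Module.End ℂ carrier
  ax : WeakAxioms vo carrier YM

attribute [instance] WeakMod.ab WeakMod.md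

/-- An object of the category `C₀`: a weak module with a `ℂ`-grading by (possibly
infinite dimensional) `L(0)`-eigenspaces, lower truncated in each coset `h + ℤ`. -/
structure C0Mod (vo : VOA V) extends WeakMod V vo where
  gr : ℂ → Submodule ℂ carrier
  internal : DirectSum.IsInternal gr
  L0_diag : ∀ (h : ℂ) (u : carrier), u ∈ gr h → YM vo.ω 1 u = h • u
  lower_trunc : ∀ h : ℂ, ∃ N : ℤ, ∀ n : ℤ, n ≤ N → gr (h + n) = ⊥

/-- A module over a vertex operator algebra: an object of `C₀` whose homogeneous
subspaces are finite dimensional. -/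
structure VMod (vo : VOA V) extends C0Mod V vo where
  fd : ∀ h : ℂ, FiniteDimensional ℂ (gr h)

variable {V}

/-- A homomorphism of weak modules. -/
def IsVHom (vo : VOA V) (W M : WeakMod V vo) (f : W.carrier →ₗ[ℂ] M.carrier) : Prop :=
  ∀ (a : V) (n : ℤ) (u : W.carrier), f (W.YM a n u) = M.YM a n (f u)

/-- A (sub)space of a weak module stable under all the vertex operators. -/
def IsSubMod (vo : VOA V) (M : WeakMod V vo) (S : Submodule ℂ M.carrier) : Prop :=
  ∀ (a : V) (n : ℤ), ∀ u ∈ S, M.YM a n u ∈ S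

/-- An irreducible weak module. -/
def IsIrred (vo : VOA V) (M : WeakMod V vo) : Prop :=
  (∃ u : M.carrier, u ≠ 0) ∧
  ∀ S : Submodule ℂ M.carrier, IsSubMod vo M S → S = ⊥ ∨ S = ⊤

variable (V) in
/-- The axioms for an `ℕ`-grading on a weak module: `aₘ M(k) ⊆ M(wt a - m - 1 + k)`. -/
def NGradingAx (vo : VOA V) (M : Type) [AddCommGroup M] [Module ℂ M]
    (YM : V →ₗ[ℂ] ℤ → Module.End ℂ M) (gr : ℕ → Submodule ℂ M) : Prop :=
  DirectSum.IsInternal gr ∧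
  ∀ (m : ℤ) (a : V), a ∈ vo.grading m → ∀ (n : ℤ) (k : ℕ), ∀ u ∈ gr k,
    (∀ d : ℕ, (d : ℤ) = m - n - 1 + k → YM a n u ∈ gr d) ∧
    (m - n - 1 + (k : ℤ) < 0 → YM a n u = 0)

/-- An `ℕ`-grading on a weak module. -/
def IsNGrading (vo : VOA V) (M : WeakMod V vo) (gr : ℕ → Submodule ℂ M.carrier) : Prop :=
  NGradingAx V vo M.carrier M.YM gr

/-- An `ℕ`-gradable weak module. -/
def NGradable (vo : VOA V) (M : WeakMod V vo) : Prop := ∃ gr, IsNGrading vo M gr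

/-- An `ℕ`-grading of a submodule `S` of a weak module (internal to `S`). -/
def SubNGrading (vo : VOA V) (M : WeakMod V vo) (S : Submodule ℂ M.carrier)
    (gr : ℕ → Submodule ℂ M.carrier) : Prop :=
  (⨆ n, gr n) = S ∧ iSupIndep gr ∧
  ∀ (m : ℤ) (a : V), a ∈ vo.grading m → ∀ (n : ℤ) (k : ℕ), ∀ u ∈ gr k,
    (∀ d : ℕ, (d : ℤ) = m - n - 1 + k → M.YM a n u ∈ gr d) ∧
    (m - n - 1 + (k : ℤ) < 0 → M.YM a n u = 0)

/-- A submodule of a weak module which is irreducible (as a module). -/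
def SubIrred (vo : VOA V) (M : WeakMod V vo) (S : Submodule ℂ M.carrier) : Prop :=
  S ≠ ⊥ ∧ ∀ T : Submodule ℂ M.carrier, T ≤ S → IsSubMod vo M T → T = ⊥ ∨ T = S

/-- Rationality of a vertex operator algebra: every `ℕ`-gradable weak module is a
direct sum of irreducible `ℕ`-gradable weak modules. -/
def Rational (vo : VOA V) : Prop :=
  ∀ M : WeakMod V vo, NGradable vo M →
    ∃ (ι : Type) (S : ι → Submodule ℂ M.carrier),
      (∀ i, IsSubMod vo M (S i)) ∧ (∀ i, SubIrred vo M (S i)) ∧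
      (∀ i, ∃ gr, SubNGrading vo M (S i) gr) ∧
      iSupIndep S ∧ (⨆ i, S i) = ⊤

/-- The axioms (I1)-(I3) for an intertwining operator of type `(W₃ ; W₁ W₂)`,
encoded through coefficients: `I(u,x) = ∑_{α ∈ ℂ} (I u α) x^{-α-1}`. -/
def IntwAxioms (vo : VOA V) (W1 W2 W3 : WeakMod V vo)
    (I : W1.carrier →ₗ[ℂ] ℂ → (W2.carrier →ₗ[ℂ] W3.carrier)) : Prop :=
  (∀ (u : W1.carrier) (v : W2.carrier) (α : ℂ),
      ∃ N : ℕ, ∀ n : ℕ, N ≤ n → I u (α + n) v = 0) ∧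
  (∀ (u : W1.carrier) (α : ℂ), I (W1.YM vo.ω 0 u) α = (-α) • I u (α - 1)) ∧
  ∀ (a : V) (u : W1.carrier) (v : W2.carrier) (p r : ℤ) (β : ℂ),
    (∑ᶠ i : ℕ, zbinom p i • I (W1.YM a (r + i) u) ((p : ℂ) + β - i) v) =
      ∑ᶠ i : ℕ, ((-1 : ℂ) ^ i * zbinom r i) •
        (W3.YM a (p + r - i) (I u (β + i) v)
          - ((-1 : ℂ) ^ r) • I u (β + (r : ℂ) - i) (W2.YM a (p + i) v))
section Series

variable (vo : VOA V) (W1 W2 : WeakMod V vo)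

/-- The space of formal series `Φ(x) = ∑_{α∈ℂ} Φ_α x^{-α-1}` with coefficients in
`Hom(W₁,W₂)`, encoded as the coefficient function `α ↦ Φ_α`. -/
abbrev SeriesSp := ℂ → (W1.carrier →ₗ[ℂ] W2.carrier)

/-- Truncation condition (G1). -/
def CondG1 (Φ : SeriesSp vo W1 W2) : Prop :=
  ∀ (α : ℂ) (u : W1.carrier), ∃ N : ℕ, ∀ n : ℕ, N ≤ n → Φ (α + n) u = 0

/-- The `L(-1)`-bracket formula (G2): `[L(-1), Φ(x)] = (d/dx)Φ(x)`. -/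
def CondG2 (Φ : SeriesSp vo W1 W2) : Prop :=
  ∀ (α : ℂ) (u : W1.carrier),
    W2.YM vo.ω 0 (Φ α u) - Φ α (W1.YM vo.ω 0 u) = (-α) • Φ (α - 1) u

/-- Locality of order `k` with respect to `a ∈ V`:
`(x₁-x₂)^k Y(a,x₁)Φ(x₂) = (x₁-x₂)^k Φ(x₂)Y(a,x₁)` in components. -/
def LocalOrder (Φ : SeriesSp vo W1 W2) (a : V) (k : ℕ) : Prop :=
  ∀ (m : ℤ) (α : ℂ) (u : W1.carrier),
    (∑ i ∈ Finset.range (k + 1), ((-1 : ℂ) ^ i * (k.choose i : ℂ)) •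
        W2.YM a (m + k - i) (Φ (α + i) u)) =
      ∑ i ∈ Finset.range (k + 1), ((-1 : ℂ) ^ i * (k.choose i : ℂ)) •
        Φ (α + i) (W1.YM a (m + k - i) u)

/-- Locality condition (G3). -/
def CondG3 (Φ : SeriesSp vo W1 W2) : Prop := ∀ a : V, ∃ k : ℕ, LocalOrder vo W1 W2 Φ a k

/-- Homogeneity of weight `h`: `[L(0),Φ(x)] = (h + x d/dx)Φ(x)`. -/
def CondHomog (Φ : SeriesSp vo W1 W2) (h : ℂ) : Prop :=
  ∀ (α : ℂ) (u : W1.carrier),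
    W2.YM vo.ω 1 (Φ α u) - Φ α (W1.YM vo.ω 1 u) = (h - α - 1) • Φ α u

/-- The left action `Y_t(a,x₀) * Φ(x₂) = Y_{W₂}(a, x₀+x₂)Φ(x₂)` in components
(value on `u ∈ W₁`). -/
def leftAct (a : V) (m : ℤ) (Φ : SeriesSp vo W1 W2) (α : ℂ) (u : W1.carrier) :
    W2.carrier :=
  ∑ᶠ i : ℕ, zbinom (-m + i - 1) i • W2.YM a (m - i) (Φ (α + i) u)

/-- The right action `Φ(x₂) * Y_t(a,x₀) = Φ(x₂)(Y_{W₁}(a,x₀+x₂) - Y_{W₁}(a,x₂+x₀))`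
in components (value on `u ∈ W₁`). -/
def rightAct (a : V) (m : ℤ) (Φ : SeriesSp vo W1 W2) (α : ℂ) (u : W1.carrier) :
    W2.carrier :=
  ∑ᶠ i : ℕ, (zbinom m i * (-1 : ℂ) ^ (m - (i : ℤ))) •
      Φ (α + (m : ℂ) - i) (W1.YM a i u)

/-- The action
`a(m) ∘ Φ(x₂) = Res_{x₁} ((x₁-x₂)^m Y_{W₂}(a,x₁)Φ(x₂) - (-x₂+x₁)^m Φ(x₂)Y_{W₁}(a,x₁))`
in components (value on `u ∈ W₁`). -/
def circAct (a : V) (m : ℤ) (Φ : SeriesSp vo W1 W2) (α : ℂ) (u : W1.carrier) :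
    W2.carrier :=
  leftAct vo W1 W2 a m Φ α u - rightAct vo W1 W2 a m Φ α u

end Series

section Tensor

variable (vo : VOA V)

/-- A tensor product of the ordered pair `(W₁,W₂)` in the category `C` of weak
modules: a weak module `M` with an intertwining operator `F` of type `(M; W₁ W₂)`
satisfying the universal property. -/
def IsTensorProdC (W1 W2 M : WeakMod V vo)
    (F : W1.carrier →ₗ[ℂ] ℂ → (W2.carrier →ₗ[ℂ] M.carrier)) : Prop :=
  IntwAxioms vo W1 W2 M F ∧
  ∀ (W : WeakMod V vo) (I : W1.carrier →ₗ[ℂ] ℂ → (W2.carrier →ₗ[ℂ] W.carrier)),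
    IntwAxioms vo W1 W2 W I →
      ∃! ψ : M.carrier →ₗ[ℂ] W.carrier, IsVHom vo M W ψ ∧
        ∀ (u : W1.carrier) (α : ℂ) (v : W2.carrier), I u α v = ψ (F u α v)

/-- A tensor product of the ordered pair `(W₁,W₂)` in the category `C₀`. -/
def IsTensorProdC0 (W1 W2 M : C0Mod V vo)
    (F : W1.carrier →ₗ[ℂ] ℂ → (W2.carrier →ₗ[ℂ] M.carrier)) : Prop :=
  IntwAxioms vo W1.toWeakMod W2.toWeakMod M.toWeakMod F ∧
  ∀ (W : C0Mod V vo) (I : W1.carrier →ₗ[ℂ] ℂ → (W2.carrier →ₗ[ℂ] W.carrier)),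
    IntwAxioms vo W1.toWeakMod W2.toWeakMod W.toWeakMod I →
      ∃! ψ : M.carrier →ₗ[ℂ] W.carrier, IsVHom vo M.toWeakMod W.toWeakMod ψ ∧
        ∀ (u : W1.carrier) (α : ℂ) (v : W2.carrier), I u α v = ψ (F u α v)

/-- A tensor product of the ordered pair `(W₁,W₂)` in the category of `V`-modules. -/
def IsTensorProdV (W1 W2 M : VMod V vo)
    (F : W1.carrier →ₗ[ℂ] ℂ → (W2.carrier →ₗ[ℂ] M.carrier)) : Prop :=
  IntwAxioms vo W1.toWeakMod W2.toWeakMod M.toWeakMod F ∧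
  ∀ (W : VMod V vo) (I : W1.carrier →ₗ[ℂ] ℂ → (W2.carrier →ₗ[ℂ] W.carrier)),
    IntwAxioms vo W1.toWeakMod W2.toWeakMod W.toWeakMod I →
      ∃! ψ : M.carrier →ₗ[ℂ] W.carrier, IsVHom vo M.toWeakMod W.toWeakMod ψ ∧
        ∀ (u : W1.carrier) (α : ℂ) (v : W2.carrier), I u α v = ψ (F u α v)

end Tensor

section F0

variable (vo : VOA V) (W1 W2 : WeakMod V vo)

/-- `F₀(W₁,W₂) = ℂ[t,t⁻¹] ⊗ W₁ ⊗ W₂`. -/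
abbrev F0Sp := ℤ →₀ (W1.carrier ⊗[ℂ] W2.carrier)

/-- The defining formula (3.5) for the `g(V)`-action on `F₀(W₁,W₂)`:
`Y_t(a,x₁)(Y_t(u,x₂) ⊗ v) = Y_t(u,x₂) ⊗ Y(a,x₁)v
  + Res_{x₀} x₂⁻¹ δ((x₁-x₀)/x₂) Y_t(Y(a,x₀)u, x₂) ⊗ v`, in components. -/
def F0ActFormula (ρ : (ℤ →₀ V) →ₗ[ℂ] Module.End ℂ (F0Sp vo W1 W2)) : Prop :=
  ∀ (a : V) (m n : ℤ) (u : W1.carrier) (v : W2.carrier),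
    ρ (Finsupp.single m a) (Finsupp.single n (u ⊗ₜ[ℂ] v)) =
      Finsupp.single n (u ⊗ₜ[ℂ] (W2.YM a m v))
        + ∑ᶠ i : ℕ, zbinom m i • Finsupp.single (m + n - i) ((W1.YM a i u) ⊗ₜ[ℂ] v)

variable {X : Type} [AddCommGroup X] [Module ℂ X]

/-- A submodule stable under a `g(V)`-type action. -/
def ActClosed (ρ : (ℤ →₀ V) →ₗ[ℂ] Module.End ℂ X) (S : Submodule ℂ X) : Prop :=
  ∀ (g : ℤ →₀ V) (x : X), x ∈ S → ρ g x ∈ S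

/-- The `g(V)`-submodule generated by a set. -/
def actSpan (ρ : (ℤ →₀ V) →ₗ[ℂ] Module.End ℂ X) (A : Set X) : Submodule ℂ X :=
  sInf {S | A ⊆ S ∧ ActClosed ρ S}

lemma actSpan_closed (ρ : (ℤ →₀ V) →ₗ[ℂ] Module.End ℂ X) (A : Set X) :
    ActClosed ρ (actSpan ρ A) := by
  intro g x hx
  simp only [actSpan, Submodule.mem_sInf] at hx ⊢
  exact fun S hS => hS.2 g x (hx S hS)

/-- The grading of `F₀(W₁,W₂)` determined by gradings of `W₁` and `W₂`:
`deg (tᵏ ⊗ u ⊗ v) = m + n - k - 1` for `u ∈ W₁(m)`, `v ∈ W₂(n)`. -/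
def F0deg (gr1 : ℕ → Submodule ℂ W1.carrier) (gr2 : ℕ → Submodule ℂ W2.carrier)
    (d : ℤ) : Submodule ℂ (F0Sp vo W1 W2) :=
  Submodule.span ℂ {x | ∃ (k : ℤ) (m n : ℕ) (u : W1.carrier) (v : W2.carrier),
    u ∈ gr1 m ∧ v ∈ gr2 n ∧ d = (m : ℤ) + n - k - 1 ∧ x = Finsupp.single k (u ⊗ₜ[ℂ] v)}

/-- The generating set of the submodule `J₀`:
`t^{m+n+i} ⊗ W₁(m) ⊗ W₂(n)` for `m, n, i ∈ ℕ`. -/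
def J0gen (gr1 : ℕ → Submodule ℂ W1.carrier) (gr2 : ℕ → Submodule ℂ W2.carrier) :
    Set (F0Sp vo W1 W2) :=
  {x | ∃ (m n i : ℕ) (u : W1.carrier) (v : W2.carrier),
    u ∈ gr1 m ∧ v ∈ gr2 n ∧ x = Finsupp.single ((m : ℤ) + n + i) (u ⊗ₜ[ℂ] v)}

end F0
/-! ### Auxiliary material for the proof -/

section Stmt2Aux

/-! #### Basic facts about `zbinom` -/

lemma zbinom_eq_prod (m : ℤ) (i : ℕ) :
    zbinom m i = (∏ t ∈ Finset.range i, ((m : ℂ) - t)) / (i.factorial : ℂ) := by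
  unfold zbinom
  congr 1
  induction i with
  | zero => simp
  | succ n ih => rw [descPochhammer_succ_eval, ih, Finset.prod_range_succ]

lemma zbinom_zero' (m : ℤ) : zbinom m 0 = 1 := by
  simp [zbinom_eq_prod]

lemma zbinom_nat_lt (m : ℤ) (i : ℕ) (h0 : 0 ≤ m) (h : m < (i : ℤ)) : zbinom m i = 0 := by
  rw [zbinom_eq_prod]
  have hmem : m.toNat ∈ Finset.range i := Finset.mem_range.2 (by omega)
  have hz : ((m.toNat : ℕ) : ℂ) = (m : ℂ) := by
    have h1 : ((m.toNat : ℤ)) = m := Int.toNat_of_nonneg h0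
    exact_mod_cast congrArg (fun z : ℤ => (z : ℂ)) h1
  rw [Finset.prod_eq_zero hmem (by rw [hz, sub_self]), zero_div]

lemma zbinom_pascal (m : ℤ) (i : ℕ) :
    zbinom (m + 1) (i + 1) = zbinom m (i + 1) + zbinom m i := by
  rw [zbinom_eq_prod, zbinom_eq_prod, zbinom_eq_prod]
  have h1 : (∏ t ∈ Finset.range (i + 1), ((((m + 1 : ℤ)) : ℂ) - (t : ℂ)))
      = ((m : ℂ) + 1) * ∏ t ∈ Finset.range i, ((m : ℂ) - t) := by
    rw [Finset.prod_range_succ']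
    have he : ∀ k ∈ Finset.range i,
        (fun t : ℕ => (((m + 1 : ℤ)) : ℂ) - (t : ℂ)) (k + 1) = (m : ℂ) - k := by
      intro k _; push_cast; ring
    rw [Finset.prod_congr rfl he]
    push_cast; ring
  have h2 : (∏ t ∈ Finset.range (i + 1), ((m : ℂ) - t))
      = (∏ t ∈ Finset.range i, ((m : ℂ) - t)) * ((m : ℂ) - i) :=
    Finset.prod_range_succ _ _
  rw [h1, h2, Nat.factorial_succ]
  have hf : ((i.factorial : ℕ) : ℂ) ≠ 0 := Nat.cast_ne_zero.2 (Nat.factorial_ne_zero i)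
  have hi1 : ((i : ℂ) + 1) ≠ 0 := Nat.cast_add_one_ne_zero i
  push_cast
  field_simp
  ring

lemma zbinom_natCast (k i : ℕ) : zbinom (k : ℤ) i = (k.choose i : ℂ) := by
  unfold zbinom
  have h0 : (((k : ℤ)) : ℂ) = ((k : ℕ) : ℂ) := by push_cast; ring
  rw [h0, descPochhammer_eval_eq_descFactorial ℂ k i,
    Nat.descFactorial_eq_factorial_mul_choose]
  have hf : ((i.factorial : ℕ) : ℂ) ≠ 0 := Nat.cast_ne_zero.2 (Nat.factorial_ne_zero i)
  push_cast
  field_simp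

lemma zbinom_reflect (s : ℤ) (j : ℕ) :
    zbinom (-s + j - 1) j = (-1 : ℂ) ^ j * zbinom s j := by
  rw [zbinom_eq_prod, zbinom_eq_prod]
  have key : (∏ t ∈ Finset.range j, ((((-s + j - 1 : ℤ)) : ℂ) - (t : ℂ)))
      = (-1 : ℂ) ^ j * ∏ t ∈ Finset.range j, ((s : ℂ) - t) := by
    have he : ∀ t ∈ Finset.range j,
        (((-s + j - 1 : ℤ)) : ℂ) - (t : ℂ)
          = (-1) * ((fun t : ℕ => (s : ℂ) - t) (j - 1 - t)) := by
      intro t ht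
      have ht' : t < j := Finset.mem_range.1 ht
      have hz : ((j - 1 - t : ℕ) : ℤ) = (j : ℤ) - 1 - t := by omega
      have hc : ((j - 1 - t : ℕ) : ℂ) = (j : ℂ) - 1 - t := by
        calc ((j - 1 - t : ℕ) : ℂ) = (((j - 1 - t : ℕ) : ℤ) : ℂ) := by push_cast; ring
          _ = ((((j : ℤ) - 1 - t) : ℤ) : ℂ) := by rw [hz]
          _ = (j : ℂ) - 1 - t := by push_cast; ring
      show (((-s + j - 1 : ℤ)) : ℂ) - (t : ℂ) = (-1) * ((s : ℂ) - ((j - 1 - t : ℕ) : ℂ))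
      rw [hc]; push_cast; ring
    rw [Finset.prod_congr rfl he, Finset.prod_mul_distrib, Finset.prod_const,
      Finset.card_range]
    exact congrArg ((-1 : ℂ) ^ j * ·) (Finset.prod_range_reflect (fun t : ℕ => (s : ℂ) - t) j)
  rw [key, mul_div_assoc]

/-! #### `zbZ` : `zbinom` with integer upper index -/

noncomputable def zbZ (m n : ℤ) : ℂ := if 0 ≤ n then zbinom m n.toNat else 0

lemma zbZ_coe (m : ℤ) (i : ℕ) : zbZ m (i : ℤ) = zbinom m i := by
  simp [zbZ]

lemma zbZ_neg (m n : ℤ) (h : n < 0) : zbZ m n = 0 := by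
  simp [zbZ, not_le.2 h]

lemma zbZ_pascal (m n : ℤ) : zbZ (m + 1) n = zbZ m n + zbZ m (n - 1) := by
  rcases lt_trichotomy n 0 with h | h | h
  · rw [zbZ_neg _ _ h, zbZ_neg _ _ h, zbZ_neg _ _ (by omega), add_zero]
  · subst h
    rw [zbZ_neg m (0 - 1) (by norm_num), add_zero]
    show zbZ (m + 1) 0 = zbZ m 0
    simp [zbZ, zbinom_zero']
  · obtain ⟨i, rfl⟩ : ∃ i : ℕ, n = (i : ℤ) + 1 := ⟨(n - 1).toNat, by omega⟩
    have e1 : ((i : ℤ) + 1) = ((i + 1 : ℕ) : ℤ) := by push_cast; ring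
    have e2 : ((i + 1 : ℕ) : ℤ) - 1 = ((i : ℕ) : ℤ) := by push_cast; ring
    rw [e1, e2, zbZ_coe, zbZ_coe, zbZ_coe]
    exact zbinom_pascal m i

/-! #### Signs -/

lemma sgz_coe (j : ℕ) : (-1 : ℂ) ^ (j : ℤ) = (-1 : ℂ) ^ j := zpow_natCast _ _

lemma sgz_add (a b : ℤ) : (-1 : ℂ) ^ (a + b) = (-1 : ℂ) ^ a * (-1 : ℂ) ^ b :=
  zpow_add₀ (by norm_num) _ _

lemma sgz_mul_self (a : ℤ) : (-1 : ℂ) ^ a * (-1 : ℂ) ^ a = 1 := by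
  rw [← sgz_add]; exact Even.neg_one_zpow ⟨a, rfl⟩

lemma sgz_neg (a : ℤ) : (-1 : ℂ) ^ (-a) = (-1 : ℂ) ^ a := by
  rw [zpow_neg]; exact inv_eq_of_mul_eq_one_left (sgz_mul_self a)

lemma sgz_sub (a b : ℤ) : (-1 : ℂ) ^ (a - b) = (-1 : ℂ) ^ a * (-1 : ℂ) ^ b := by
  rw [sub_eq_add_neg, sgz_add, sgz_neg]

lemma npow_neg_one_mul_self (j : ℕ) : (-1 : ℂ) ^ j * (-1 : ℂ) ^ j = 1 := by
  rw [← pow_add]; exact Even.neg_one_pow ⟨j, rfl⟩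

lemma npow_neg_one_sub {k j : ℕ} (h : j ≤ k) :
    (-1 : ℂ) ^ (k - j) = (-1 : ℂ) ^ k * (-1 : ℂ) ^ j := by
  have h1 : (-1 : ℂ) ^ (k - j) * (-1 : ℂ) ^ j = (-1 : ℂ) ^ k := by
    rw [← pow_add, Nat.sub_add_cancel h]
  calc (-1 : ℂ) ^ (k - j) = (-1 : ℂ) ^ (k - j) * ((-1 : ℂ) ^ j * (-1 : ℂ) ^ j) := by
        rw [npow_neg_one_mul_self, mul_one]
    _ = ((-1 : ℂ) ^ (k - j) * (-1 : ℂ) ^ j) * (-1 : ℂ) ^ j := by ring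
    _ = (-1 : ℂ) ^ k * (-1 : ℂ) ^ j := by rw [h1]

end Stmt2Aux
section Stmt2Aux2

/-! #### `finsum` helpers -/

lemma finsum_bound {E : Type*} [AddCommMonoid E] (g : ℕ → E) (N : ℕ)
    (h : ∀ n : ℕ, N ≤ n → g n = 0) : (∑ᶠ n, g n) = ∑ n ∈ Finset.range N, g n := by
  apply finsum_eq_sum_of_support_subset
  intro x hx
  simp only [Function.mem_support] at hx
  simp only [Finset.coe_range, Set.mem_Iio]
  by_contra hc
  exact hx (h x (by omega))

lemma finsum_vanish {E : Type*} [AddCommMonoid E] (g : ℕ → E) (h : ∀ n, g n = 0) :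
    (∑ᶠ n, g n) = 0 := by
  rw [finsum_bound g 0 (fun n _ => h n)]; simp

lemma finsum_split {E : Type*} [AddCommGroup E] [Module ℂ E] (c : ℕ → ℂ) (d : ℂ) (X Y : ℕ → E)
    (NX : ℕ) (hX : ∀ i, NX ≤ i → X i = 0) (NY : ℕ) (hY : ∀ i, NY ≤ i → Y i = 0) :
    (∑ᶠ i : ℕ, c i • (X i - d • Y i))
      = (∑ᶠ i : ℕ, c i • X i) - ∑ᶠ i : ℕ, (c i * d) • Y i := by
  rw [finsum_bound (fun i => c i • (X i - d • Y i)) (max NX NY) (fun i hi => by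
        show c i • (X i - d • Y i) = 0
        rw [hX i (le_trans (le_max_left _ _) hi), hY i (le_trans (le_max_right _ _) hi),
          smul_zero, sub_zero, smul_zero]),
      finsum_bound (fun i => c i • X i) (max NX NY) (fun i hi => by
        show c i • X i = 0
        rw [hX i (le_trans (le_max_left _ _) hi), smul_zero]),
      finsum_bound (fun i => (c i * d) • Y i) (max NX NY) (fun i hi => by
        show (c i * d) • Y i = 0
        rw [hY i (le_trans (le_max_right _ _) hi), smul_zero]),
      ← Finset.sum_sub_distrib]
  apply Finset.sum_congr rfl
  intro i _
  rw [smul_sub, smul_smul]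

lemma finsum_pascal {E : Type*} [AddCommGroup E] [Module ℂ E] (r : ℤ) (F : ℕ → E) (N : ℕ)
    (hF : ∀ i, N ≤ i → F i = 0) :
    (∑ᶠ i : ℕ, zbinom (r + 1) i • F i)
      = (∑ᶠ i : ℕ, zbinom r i • F i) + ∑ᶠ i : ℕ, zbinom r i • F (i + 1) := by
  rw [finsum_bound (fun i => zbinom (r + 1) i • F i) (N + 1)
        (fun i hi => by show zbinom (r + 1) i • F i = 0; rw [hF i (by omega), smul_zero]),
      finsum_bound (fun i => zbinom r i • F i) (N + 1)
        (fun i hi => by show zbinom r i • F i = 0; rw [hF i (by omega), smul_zero]),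
      finsum_bound (fun i => zbinom r i • F (i + 1)) N
        (fun i hi => by show zbinom r i • F (i + 1) = 0; rw [hF _ (by omega), smul_zero])]
  have key : ∀ i ∈ Finset.range (N + 1), zbinom (r + 1) i • F i
      = zbinom r i • F i + (if i = 0 then 0 else zbinom r (i - 1) • F i) := by
    intro i _
    match i with
    | 0 => rw [if_pos rfl, add_zero, zbinom_zero', zbinom_zero']
    | (j + 1) =>
      rw [if_neg (Nat.succ_ne_zero j), zbinom_pascal, add_smul, Nat.add_sub_cancel]
  rw [Finset.sum_congr rfl key, Finset.sum_add_distrib]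
  congr 1
  rw [Finset.sum_range_succ' (fun i => if i = 0 then 0 else zbinom r (i - 1) • F i) N]
  simp

/-! #### Two binomial summation identities -/

lemma alt_pascal_sum (P : ℕ) (F : ℕ → ℂ) :
    (∑ i ∈ Finset.range (P + 2), ((-1 : ℂ) ^ i * ((P + 1).choose i : ℂ)) * F i)
      = (∑ i ∈ Finset.range (P + 1), ((-1 : ℂ) ^ i * (P.choose i : ℂ)) * F i)
        - ∑ i ∈ Finset.range (P + 1), ((-1 : ℂ) ^ i * (P.choose i : ℂ)) * F (i + 1) := by
  have hT : (∑ i ∈ Finset.range (P + 1), ((-1 : ℂ) ^ i * (P.choose (i + 1) : ℂ)) * F (i + 1))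
      = ∑ i ∈ Finset.range P, ((-1 : ℂ) ^ i * (P.choose (i + 1) : ℂ)) * F (i + 1) := by
    rw [Finset.sum_range_succ, Nat.choose_succ_self]
    simp
  have hL : (∑ i ∈ Finset.range (P + 2), ((-1 : ℂ) ^ i * ((P + 1).choose i : ℂ)) * F i)
      = F 0 - (∑ i ∈ Finset.range (P + 1), ((-1 : ℂ) ^ i * (P.choose i : ℂ)) * F (i + 1))
          - ∑ i ∈ Finset.range (P + 1), ((-1 : ℂ) ^ i * (P.choose (i + 1) : ℂ)) * F (i + 1) := by
    rw [show P + 2 = (P + 1) + 1 from rfl,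
      Finset.sum_range_succ' (fun i => ((-1 : ℂ) ^ i * ((P + 1).choose i : ℂ)) * F i) (P + 1)]
    have he : ∀ i ∈ Finset.range (P + 1),
        (fun i => ((-1 : ℂ) ^ i * ((P + 1).choose i : ℂ)) * F i) (i + 1)
          = (-(((-1 : ℂ) ^ i * (P.choose i : ℂ)) * F (i + 1)))
            + (-(((-1 : ℂ) ^ i * (P.choose (i + 1) : ℂ)) * F (i + 1))) := by
      intro i _
      show ((-1 : ℂ) ^ (i + 1) * ((P + 1).choose (i + 1) : ℂ)) * F (i + 1) = _
      rw [Nat.choose_succ_succ]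
      push_cast
      ring
    rw [Finset.sum_congr rfl he, Finset.sum_add_distrib, Finset.sum_neg_distrib,
      Finset.sum_neg_distrib]
    simp only [Nat.choose_zero_right, Nat.cast_one, pow_zero, one_mul, mul_one]
    ring
  have hA : (∑ i ∈ Finset.range (P + 1), ((-1 : ℂ) ^ i * (P.choose i : ℂ)) * F i)
      = F 0 - ∑ i ∈ Finset.range P, ((-1 : ℂ) ^ i * (P.choose (i + 1) : ℂ)) * F (i + 1) := by
    rw [Finset.sum_range_succ' (fun i => ((-1 : ℂ) ^ i * (P.choose i : ℂ)) * F i) P]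
    have he : ∀ i ∈ Finset.range P,
        (fun i => ((-1 : ℂ) ^ i * (P.choose i : ℂ)) * F i) (i + 1)
          = -(((-1 : ℂ) ^ i * (P.choose (i + 1) : ℂ)) * F (i + 1)) := by
      intro i _
      show ((-1 : ℂ) ^ (i + 1) * (P.choose (i + 1) : ℂ)) * F (i + 1) = _
      push_cast
      ring
    rw [Finset.sum_congr rfl he, Finset.sum_neg_distrib]
    simp only [Nat.choose_zero_right, Nat.cast_one, pow_zero, one_mul, mul_one]
    ring
  rw [hL, hA, hT]
  ring

lemma V_eq (P : ℕ) : ∀ (r n : ℤ),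
    (∑ i ∈ Finset.range (P + 1),
        ((-1 : ℂ) ^ i * (P.choose i : ℂ)) * zbZ (r + P - i) (n - i)) = zbZ r n := by
  induction P with
  | zero =>
    intro r n
    simp
  | succ P ih =>
    intro r n
    rw [show P + 1 + 1 = P + 2 from rfl]
    rw [alt_pascal_sum P (fun i => zbZ (r + (P + 1 : ℕ) - i) (n - i))]
    have e1 : ∀ i ∈ Finset.range (P + 1),
        ((-1 : ℂ) ^ i * (P.choose i : ℂ)) * zbZ (r + ((P + 1 : ℕ) : ℤ) - i) (n - i)
          = ((-1 : ℂ) ^ i * (P.choose i : ℂ)) * zbZ ((r + 1) + (P : ℕ) - i) (n - i) := by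
      intro i _
      congr 2
      push_cast; ring
    have e2 : ∀ i ∈ Finset.range (P + 1),
        ((-1 : ℂ) ^ i * (P.choose i : ℂ)) * zbZ (r + ((P + 1 : ℕ) : ℤ) - ((i + 1 : ℕ) : ℤ)) (n - ((i + 1 : ℕ) : ℤ))
          = ((-1 : ℂ) ^ i * (P.choose i : ℂ)) * zbZ (r + (P : ℕ) - i) ((n - 1) - i) := by
      intro i _
      congr 2
      · push_cast; ring
      · push_cast; ring
    rw [Finset.sum_congr rfl e1, Finset.sum_congr rfl e2, ih (r + 1) n, ih r (n - 1),
      zbZ_pascal]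
    ring

lemma T_eq_zero : ∀ (P : ℕ) (r j : ℤ), j < (P : ℤ) →
    (∑ i ∈ Finset.range (P + 1),
        ((-1 : ℂ) ^ i * (P.choose i : ℂ)) * zbZ (r + i) j) = 0 := by
  intro P
  induction P with
  | zero =>
    intro r j hj
    simp only [Nat.cast_zero] at hj
    simp [zbZ_neg _ _ hj]
  | succ P ih =>
    intro r j hj
    rw [show P + 1 + 1 = P + 2 from rfl]
    rw [alt_pascal_sum P (fun i => zbZ (r + i) j)]
    have e2 : ∀ i ∈ Finset.range (P + 1),
        ((-1 : ℂ) ^ i * (P.choose i : ℂ)) * zbZ (r + ((i + 1 : ℕ) : ℤ)) j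
          = ((-1 : ℂ) ^ i * (P.choose i : ℂ)) * zbZ (r + i) j
            + ((-1 : ℂ) ^ i * (P.choose i : ℂ)) * zbZ (r + i) (j - 1) := by
      intro i _
      rw [show r + ((i + 1 : ℕ) : ℤ) = (r + i) + 1 by push_cast; ring, zbZ_pascal]
      ring
    rw [Finset.sum_congr rfl e2, Finset.sum_add_distrib]
    rw [ih r (j - 1) (by push_cast at hj ⊢; omega)]
    ring

lemma V_eq' (P : ℕ) (r n : ℤ) :
    (∑ i ∈ Finset.range (P + 1),
        ((-1 : ℂ) ^ i * (P.choose i : ℂ)) * zbZ (r + i) (n - P + i))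
      = (-1 : ℂ) ^ P * zbZ r n := by
  have h := V_eq P r n
  rw [← Finset.sum_range_reflect] at h
  have he : ∀ i ∈ Finset.range (P + 1),
      (fun i => ((-1 : ℂ) ^ i * (P.choose i : ℂ)) * zbZ (r + P - i) (n - i)) (P + 1 - 1 - i)
        = (-1 : ℂ) ^ P * (((-1 : ℂ) ^ i * (P.choose i : ℂ)) * zbZ (r + i) (n - P + i)) := by
    intro i hi
    have hiP : i ≤ P := Nat.lt_succ_iff.mp (Finset.mem_range.1 hi)
    simp only [Nat.add_sub_cancel]
    show ((-1 : ℂ) ^ (P - i) * (P.choose (P - i) : ℂ)) * zbZ (r + P - ((P - i : ℕ) : ℤ)) (n - ((P - i : ℕ) : ℤ)) = _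
    rw [Nat.choose_symm hiP, npow_neg_one_sub hiP,
      show ((P - i : ℕ) : ℤ) = (P : ℤ) - i by omega,
      show r + (P : ℕ) - ((P : ℤ) - i) = r + i by ring,
      show n - ((P : ℤ) - i) = n - P + i by ring]
    ring
  rw [Finset.sum_congr rfl he, ← Finset.mul_sum] at h
  have hsq : (-1 : ℂ) ^ P * (-1 : ℂ) ^ P = 1 := npow_neg_one_mul_self P
  calc (∑ i ∈ Finset.range (P + 1), ((-1 : ℂ) ^ i * (P.choose i : ℂ)) * zbZ (r + i) (n - P + i))
      = ((-1 : ℂ) ^ P * (-1 : ℂ) ^ P) * ∑ i ∈ Finset.range (P + 1),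
          ((-1 : ℂ) ^ i * (P.choose i : ℂ)) * zbZ (r + i) (n - P + i) := by rw [hsq, one_mul]
    _ = (-1 : ℂ) ^ P * zbZ r n := by rw [mul_assoc, h]

/-! #### A reflection identity for sums against a binomial kernel -/

lemma reflect_sum {E : Type*} [AddCommGroup E] [Module ℂ E] (k : ℕ) (Bf : ℤ → ℂ → E)
    (p : ℤ) (β : ℂ) :
    (∑ i ∈ Finset.range (k + 1),
        ((-1 : ℂ) ^ i * (k.choose i : ℂ) * (-1 : ℂ) ^ (k : ℤ)) • Bf (p + i) (β + k - i))
      = ∑ i ∈ Finset.range (k + 1),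
          ((-1 : ℂ) ^ i * (k.choose i : ℂ)) • Bf (p + k - i) (β + i) := by
  rw [← Finset.sum_range_reflect
      (fun i => ((-1 : ℂ) ^ i * (k.choose i : ℂ)) • Bf (p + k - i) (β + i)) (k + 1)]
  apply Finset.sum_congr rfl
  intro j hj
  have hjk : j ≤ k := Nat.lt_succ_iff.mp (Finset.mem_range.1 hj)
  simp only [Nat.add_sub_cancel]
  show _ = ((-1 : ℂ) ^ (k - j) * (k.choose (k - j) : ℂ)) • Bf (p + k - ((k - j : ℕ) : ℤ)) (β + ((k - j : ℕ) : ℂ))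
  rw [Nat.choose_symm hjk, npow_neg_one_sub hjk,
    show ((k - j : ℕ) : ℤ) = (k : ℤ) - j by omega,
    show ((k - j : ℕ) : ℂ) = (k : ℂ) - (j : ℂ) from Nat.cast_sub hjk,
    show p + (k : ℕ) - ((k : ℤ) - j) = p + j by ring,
    show β + ((k : ℂ) - (j : ℂ)) = β + k - j by ring, sgz_coe]
  congr 1
  ring

end Stmt2Aux2
section Stmt2Master

variable {E : Type*} [AddCommGroup E] [Module ℂ E]

/-- `S₁(p,r,β) = ∑ᵢ binom(p,i) C(r+i, p+β-i)` (the iterate side). -/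
noncomputable def mS1 (C : ℤ → ℂ → E) (p r : ℤ) (β : ℂ) : E :=
  ∑ᶠ i : ℕ, zbinom p i • C (r + i) ((p : ℂ) + β - i)

/-- `S₂(p,r,β)`, the `A`-side of the Jacobi sum. -/
noncomputable def mS2 (A : ℤ → ℂ → E) (p r : ℤ) (β : ℂ) : E :=
  ∑ᶠ i : ℕ, ((-1 : ℂ) ^ i * zbinom r i) • A (p + r - i) (β + i)

/-- `S₃(p,r,β)`, the `B`-side of the Jacobi sum. -/
noncomputable def mS3 (B : ℤ → ℂ → E) (p r : ℤ) (β : ℂ) : E :=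
  ∑ᶠ i : ℕ, ((-1 : ℂ) ^ i * zbinom r i * (-1 : ℂ) ^ r) • B (p + i) (β + r - i)

/-- Truncation hypothesis on `A` (from (G1)): uniform in the first argument. -/
def mHA (A : ℤ → ℂ → E) : Prop :=
  ∀ β : ℂ, ∃ N : ℕ, ∀ (m n : ℤ), (N : ℤ) ≤ n → A m (β + n) = 0

/-- Truncation hypothesis on `B` (from weak-module truncation). -/
def mHB (B : ℤ → ℂ → E) (NB : ℕ) : Prop :=
  ∀ m : ℤ, (NB : ℤ) ≤ m → ∀ γ : ℂ, B m γ = 0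

lemma mHA_shift {A : ℤ → ℂ → E} (hA : mHA A) (β : ℂ) :
    ∃ N : ℕ, ∀ (m : ℤ) (i : ℕ), N ≤ i → A m (β + i) = 0 := by
  obtain ⟨N, hN⟩ := hA β
  refine ⟨N, fun m i hi => ?_⟩
  have := hN m i (by exact_mod_cast hi)
  rwa [Int.cast_natCast] at this

lemma mS2_rec {A : ℤ → ℂ → E} (hA : mHA A) (p r : ℤ) (β : ℂ) :
    mS2 A p (r + 1) β = mS2 A (p + 1) r β - mS2 A p r (β + 1) := by
  obtain ⟨N, hN⟩ := mHA_shift hA β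
  have e0 : mS2 A p (r + 1) β
      = ∑ᶠ i : ℕ, zbinom (r + 1) i • (((-1 : ℂ) ^ i) • A (p + r + 1 - i) (β + i)) := by
    unfold mS2
    exact finsum_congr fun i => by
      rw [smul_smul, mul_comm, show p + (r + 1) - (i : ℤ) = p + r + 1 - i by ring]
  rw [e0, finsum_pascal r (fun i => ((-1 : ℂ) ^ i) • A (p + r + 1 - i) (β + i)) N
    (fun i hi => by show ((-1 : ℂ) ^ i) • A (p + r + 1 - i) (β + i) = 0
                    rw [hN _ i hi, smul_zero])]
  have e1 : (∑ᶠ i : ℕ, zbinom r i • (((-1 : ℂ) ^ i) • A (p + r + 1 - i) (β + i)))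
      = mS2 A (p + 1) r β := by
    unfold mS2
    exact finsum_congr fun i => by
      rw [smul_smul, mul_comm, show p + r + 1 - (i : ℤ) = p + 1 + r - i by ring]
  have e2 : (∑ᶠ i : ℕ, zbinom r i • (((-1 : ℂ) ^ (i + 1)) • A (p + r + 1 - ((i + 1 : ℕ) : ℤ)) (β + ((i + 1 : ℕ) : ℂ))))
      = -mS2 A p r (β + 1) := by
    unfold mS2
    rw [← finsum_neg_distrib]
    exact finsum_congr fun i => by
      rw [smul_smul, show p + r + 1 - ((i + 1 : ℕ) : ℤ) = p + r - i by push_cast; ring,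
        show β + ((i + 1 : ℕ) : ℂ) = (β + 1) + i by push_cast; ring]
      rw [show zbinom r i * (-1 : ℂ) ^ (i + 1) = -((-1 : ℂ) ^ i * zbinom r i) by ring,
        neg_smul]
  rw [e1, e2]
  abel

lemma mS3_rec {B : ℤ → ℂ → E} {NB : ℕ} (hB : mHB B NB) (p r : ℤ) (β : ℂ) :
    mS3 B p (r + 1) β = mS3 B (p + 1) r β - mS3 B p r (β + 1) := by
  have e0 : mS3 B p (r + 1) β
      = ∑ᶠ i : ℕ, zbinom (r + 1) i •
          ((((-1 : ℂ) ^ i) * (-1 : ℂ) ^ (r + 1)) • B (p + i) (β + r + 1 - i)) := by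
    unfold mS3
    exact finsum_congr fun i => by
      rw [smul_smul, show β + ((r + 1 : ℤ) : ℂ) - (i : ℂ) = β + r + 1 - i by push_cast; ring]
      congr 1
      ring
  rw [e0, finsum_pascal r _ ((NB + p.natAbs + 1))
    (fun i hi => by
      show (((-1 : ℂ) ^ i) * (-1 : ℂ) ^ (r + 1)) • B (p + i) (β + r + 1 - i) = 0
      rw [hB (p + i) (by omega) _, smul_zero])]
  have e1 : (∑ᶠ i : ℕ, zbinom r i • ((((-1 : ℂ) ^ i) * (-1 : ℂ) ^ (r + 1)) • B (p + i) (β + r + 1 - i)))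
      = -mS3 B p r (β + 1) := by
    unfold mS3
    rw [← finsum_neg_distrib]
    exact finsum_congr fun i => by
      rw [smul_smul, show β + r + 1 - (i : ℂ) = (β + 1) + (r : ℂ) - i by ring]
      rw [show zbinom r i * ((-1 : ℂ) ^ i * (-1 : ℂ) ^ (r + 1))
          = -((-1 : ℂ) ^ i * zbinom r i * (-1 : ℂ) ^ r) by
        rw [sgz_add, zpow_one]; ring, neg_smul]
  have e2 : (∑ᶠ i : ℕ, zbinom r i •
        ((((-1 : ℂ) ^ (i + 1)) * (-1 : ℂ) ^ (r + 1)) • B (p + ((i + 1 : ℕ) : ℤ)) (β + r + 1 - ((i + 1 : ℕ) : ℂ))))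
      = mS3 B (p + 1) r β := by
    unfold mS3
    exact finsum_congr fun i => by
      rw [smul_smul, show p + ((i + 1 : ℕ) : ℤ) = (p + 1) + i by push_cast; ring,
        show β + r + 1 - ((i + 1 : ℕ) : ℂ) = β + (r : ℂ) - i by push_cast; ring]
      congr 1
      rw [sgz_add, zpow_one]
      push_cast
      ring
  rw [e1, e2]
  abel

lemma mS1_rec {C : ℤ → ℂ → E} {k : ℕ} (hC : ∀ s : ℤ, (k : ℤ) ≤ s → ∀ γ : ℂ, C s γ = 0)
    (p r : ℤ) (β : ℂ) :
    mS1 C p (r + 1) β = mS1 C (p + 1) r β - mS1 C p r (β + 1) := by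
  have key : mS1 C (p + 1) r β = mS1 C p r (β + 1) + mS1 C p (r + 1) β := by
    have e0 : mS1 C (p + 1) r β
        = ∑ᶠ i : ℕ, zbinom (p + 1) i • C (r + i) ((p : ℂ) + 1 + β - i) := by
      unfold mS1
      exact finsum_congr fun i => by
        rw [show (((p + 1 : ℤ)) : ℂ) + β - (i : ℂ) = (p : ℂ) + 1 + β - i by push_cast; ring]
    rw [e0, finsum_pascal p (fun i => C (r + i) ((p : ℂ) + 1 + β - i)) ((k : ℤ) - r).toNat
      (fun i hi => hC (r + i) (by omega) _)]
    have e1 : (∑ᶠ i : ℕ, zbinom p i • C (r + i) ((p : ℂ) + 1 + β - i))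
        = mS1 C p r (β + 1) := by
      unfold mS1
      exact finsum_congr fun i => by
        rw [show (p : ℂ) + 1 + β - (i : ℂ) = (p : ℂ) + (β + 1) - i by ring]
    have e2 : (∑ᶠ i : ℕ, zbinom p i • C (r + ((i + 1 : ℕ) : ℤ)) ((p : ℂ) + 1 + β - ((i + 1 : ℕ) : ℂ)))
        = mS1 C p (r + 1) β := by
      unfold mS1
      exact finsum_congr fun i => by
        rw [show r + ((i + 1 : ℕ) : ℤ) = (r + 1) + i by push_cast; ring,
          show (p : ℂ) + 1 + β - ((i + 1 : ℕ) : ℂ) = (p : ℂ) + β - i by push_cast; ring]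
    rw [e1, e2]
  rw [key]
  abel

lemma mS2_eq_mS3_at_k {A B : ℤ → ℂ → E} (k : ℕ)
    (hloc : ∀ (m : ℤ) (α : ℂ),
      (∑ i ∈ Finset.range (k + 1), ((-1 : ℂ) ^ i * (k.choose i : ℂ)) • A (m + k - i) (α + i))
        = ∑ i ∈ Finset.range (k + 1), ((-1 : ℂ) ^ i * (k.choose i : ℂ)) • B (m + k - i) (α + i))
    (p : ℤ) (β : ℂ) :
    mS2 A p (k : ℤ) β = mS3 B p (k : ℤ) β := by
  have h2 : mS2 A p (k : ℤ) β
      = ∑ i ∈ Finset.range (k + 1), ((-1 : ℂ) ^ i * (k.choose i : ℂ)) • A (p + k - i) (β + i) := by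
    unfold mS2
    rw [finsum_bound _ (k + 1) (fun i hi => by
      show ((-1 : ℂ) ^ i * zbinom (k : ℤ) i) • A (p + (k : ℤ) - i) (β + i) = 0
      rw [zbinom_nat_lt (k : ℤ) i (by positivity) (by exact_mod_cast hi), mul_zero, zero_smul])]
    exact Finset.sum_congr rfl fun i _ => by rw [zbinom_natCast]
  have h3 : mS3 B p (k : ℤ) β
      = ∑ i ∈ Finset.range (k + 1),
          ((-1 : ℂ) ^ i * (k.choose i : ℂ) * (-1 : ℂ) ^ ((k : ℕ) : ℤ)) • B (p + i) (β + k - i) := by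
    unfold mS3
    rw [finsum_bound _ (k + 1) (fun i hi => by
      show ((-1 : ℂ) ^ i * zbinom (k : ℤ) i * (-1 : ℂ) ^ ((k : ℕ) : ℤ)) • B (p + i) (β + ((k : ℤ) : ℂ) - i) = 0
      rw [zbinom_nat_lt (k : ℤ) i (by positivity) (by exact_mod_cast hi), mul_zero, zero_mul,
        zero_smul])]
    exact Finset.sum_congr rfl fun i _ => by
      rw [zbinom_natCast, show ((( k : ℤ)) : ℂ) = ((k : ℕ) : ℂ) by push_cast; ring]
  rw [h2, h3, hloc p β, ← reflect_sum k B p β]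

end Stmt2Master
section Stmt2Assoc

variable {E : Type*} [AddCommGroup E] [Module ℂ E]

/-- Weak associativity: for `p ≥ NB` (a natural number), the Jacobi identity holds,
with the `B`-side vanishing. -/
lemma massoc {A B C : ℤ → ℂ → E} {NB : ℕ} (hB : mHB B NB) (hA : mHA A)
    (hC : ∀ (s : ℤ) (γ : ℂ), C s γ =
      (∑ᶠ j : ℕ, ((-1 : ℂ) ^ j * zbinom s j) • A (s - j) (γ + j))
        - ∑ᶠ j : ℕ, ((-1 : ℂ) ^ j * zbinom s j * (-1 : ℂ) ^ s) • B j (γ + s - j))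
    (P : ℕ) (hP : NB ≤ P) (r : ℤ) (β : ℂ) :
    mS1 C (P : ℤ) r β = mS2 A (P : ℤ) r β := by
  obtain ⟨NA, hNA⟩ := mHA_shift hA β
  set J := NA + NB + 1 with hJdef
  have hJA : NA ≤ J := by omega
  have hJB : NB + 1 ≤ J := by omega
  -- the inner coefficient function for the A-part after reindexing
  set H : ℕ → ℕ → E := fun i n =>
    ((-1 : ℂ) ^ ((n : ℤ) - P + i) * (P.choose i : ℂ) * zbZ (r + i) ((n : ℤ) - P + i))
      • A ((P : ℤ) + r - n) (β + n) with hHdef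
  -- Step 1: reduce `mS1` to a finite double sum.
  have step1 : mS1 C (P : ℤ) r β
      = (∑ i ∈ Finset.range (P + 1), ∑ j ∈ Finset.range J,
          ((P.choose i : ℂ) * ((-1 : ℂ) ^ j * zbinom (r + i) j))
            • A (r + i - j) (((P : ℤ) : ℂ) + β - i + j))
        - ∑ i ∈ Finset.range (P + 1), ∑ j ∈ Finset.range J,
            ((P.choose i : ℂ) * ((-1 : ℂ) ^ j * zbinom (r + i) j * (-1 : ℂ) ^ (r + (i : ℤ))))
              • B j (((P : ℤ) : ℂ) + β + r - j) := by
    unfold mS1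
    rw [finsum_bound _ (P + 1) (fun i hi => by
      show zbinom (P : ℤ) i • C (r + i) (((P : ℤ) : ℂ) + β - i) = 0
      rw [zbinom_nat_lt (P : ℤ) i (by positivity) (by exact_mod_cast hi), zero_smul])]
    rw [← Finset.sum_sub_distrib]
    apply Finset.sum_congr rfl
    intro i hi
    have hiP : i ≤ P := Nat.lt_succ_iff.mp (Finset.mem_range.1 hi)
    rw [hC (r + i) (((P : ℤ) : ℂ) + β - i)]
    have eA : (∑ᶠ j : ℕ, ((-1 : ℂ) ^ j * zbinom (r + i) j) • A (r + i - j) ((((P : ℤ) : ℂ) + β - i) + j))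
        = ∑ j ∈ Finset.range J, ((-1 : ℂ) ^ j * zbinom (r + i) j) • A (r + i - j) (((P : ℤ) : ℂ) + β - i + j) := by
      apply finsum_bound
      intro j hj
      show ((-1 : ℂ) ^ j * zbinom (r + i) j) • A (r + i - j) ((((P : ℤ) : ℂ) + β - i) + j) = 0
      rw [show (((P : ℤ) : ℂ) + β - i) + (j : ℂ) = β + ((P - i + j : ℕ) : ℂ) by
          push_cast [Nat.cast_sub hiP]; ring,
        hNA _ (P - i + j) (by omega), smul_zero]
    have eB : (∑ᶠ j : ℕ, ((-1 : ℂ) ^ j * zbinom (r + i) j * (-1 : ℂ) ^ (r + (i : ℤ)))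
          • B j ((((P : ℤ) : ℂ) + β - i) + ((r + (i : ℤ) : ℤ) : ℂ) - j))
        = ∑ j ∈ Finset.range J, ((-1 : ℂ) ^ j * zbinom (r + i) j * (-1 : ℂ) ^ (r + (i : ℤ)))
            • B j (((P : ℤ) : ℂ) + β + r - j) := by
      rw [finsum_bound _ J (fun j hj => by
        show ((-1 : ℂ) ^ j * zbinom (r + i) j * (-1 : ℂ) ^ (r + (i : ℤ)))
            • B j ((((P : ℤ) : ℂ) + β - i) + ((r + (i : ℤ) : ℤ) : ℂ) - j) = 0
        rw [hB j (by omega) _, smul_zero])]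
      apply Finset.sum_congr rfl
      intro j _
      rw [show (((P : ℤ) : ℂ) + β - i) + ((r + (i : ℤ) : ℤ) : ℂ) - j
          = ((P : ℤ) : ℂ) + β + r - j by push_cast; ring]
    rw [eA, eB, smul_sub, Finset.smul_sum, Finset.smul_sum]
    congr 1
    · apply Finset.sum_congr rfl
      intro j _
      rw [smul_smul, zbinom_natCast]
    · apply Finset.sum_congr rfl
      intro j _
      rw [smul_smul, zbinom_natCast]
  -- Step 2: the B-part vanishes.
  have step2 : (∑ i ∈ Finset.range (P + 1), ∑ j ∈ Finset.range J,
      ((P.choose i : ℂ) * ((-1 : ℂ) ^ j * zbinom (r + i) j * (-1 : ℂ) ^ (r + (i : ℤ))))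
        • B j (((P : ℤ) : ℂ) + β + r - j)) = 0 := by
    rw [Finset.sum_comm]
    apply Finset.sum_eq_zero
    intro j _
    by_cases hjNB : (NB : ℤ) ≤ (j : ℤ)
    · apply Finset.sum_eq_zero
      intro i _
      rw [hB j hjNB _, smul_zero]
    · push_neg at hjNB
      rw [← Finset.sum_smul]
      have hcoef : (∑ i ∈ Finset.range (P + 1),
          (P.choose i : ℂ) * ((-1 : ℂ) ^ j * zbinom (r + i) j * (-1 : ℂ) ^ (r + (i : ℤ)))) = 0 := by
        have key := T_eq_zero P r (j : ℤ) (by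
          have : (j : ℤ) < (NB : ℤ) := hjNB
          have : (NB : ℤ) ≤ (P : ℤ) := by exact_mod_cast hP
          omega)
        calc (∑ i ∈ Finset.range (P + 1),
              (P.choose i : ℂ) * ((-1 : ℂ) ^ j * zbinom (r + i) j * (-1 : ℂ) ^ (r + (i : ℤ))))
            = ((-1 : ℂ) ^ j * (-1 : ℂ) ^ r) * ∑ i ∈ Finset.range (P + 1),
                ((-1 : ℂ) ^ i * (P.choose i : ℂ)) * zbZ (r + i) (j : ℤ) := by
              rw [Finset.mul_sum]
              apply Finset.sum_congr rfl
              intro i _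
              rw [zbZ_coe, sgz_add, sgz_coe]
              ring
          _ = 0 := by rw [key, mul_zero]
      rw [hcoef, zero_smul]
  -- Step 3: reindex the A-part.
  have step3 : (∑ i ∈ Finset.range (P + 1), ∑ j ∈ Finset.range J,
      ((P.choose i : ℂ) * ((-1 : ℂ) ^ j * zbinom (r + i) j))
        • A (r + i - j) (((P : ℤ) : ℂ) + β - i + j))
      = ∑ i ∈ Finset.range (P + 1), ∑ n ∈ Finset.range (P + J), H i n := by
    apply Finset.sum_congr rfl
    intro i hi
    have hiP : i ≤ P := Nat.lt_succ_iff.mp (Finset.mem_range.1 hi)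
    rw [show P + J = (P - i) + (J + i) by omega]
    conv_rhs => rw [Finset.sum_range_add]
    have z1 : (∑ n ∈ Finset.range (P - i), H i n) = 0 := by
      apply Finset.sum_eq_zero
      intro n hn
      have hn' : n < P - i := Finset.mem_range.1 hn
      show ((-1 : ℂ) ^ ((n : ℤ) - P + i) * (P.choose i : ℂ) * zbZ (r + i) ((n : ℤ) - P + i))
          • A ((P : ℤ) + r - n) (β + n) = 0
      rw [zbZ_neg _ _ (by omega), mul_zero, zero_smul]
    rw [z1, zero_add]
    conv_rhs => rw [Finset.sum_range_add]
    have z2 : (∑ x ∈ Finset.range i, H i ((P - i) + (J + x))) = 0 := by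
      apply Finset.sum_eq_zero
      intro x _
      show ((-1 : ℂ) ^ ((((P - i) + (J + x) : ℕ) : ℤ) - P + i) * (P.choose i : ℂ)
            * zbZ (r + i) ((((P - i) + (J + x) : ℕ) : ℤ) - P + i))
          • A ((P : ℤ) + r - ((P - i) + (J + x) : ℕ)) (β + (((P - i) + (J + x) : ℕ) : ℂ)) = 0
      rw [hNA _ ((P - i) + (J + x)) (by omega), smul_zero]
    rw [z2, add_zero]
    apply Finset.sum_congr rfl
    intro j hj
    show ((P.choose i : ℂ) * ((-1 : ℂ) ^ j * zbinom (r + i) j))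
        • A (r + i - j) (((P : ℤ) : ℂ) + β - i + j)
      = ((-1 : ℂ) ^ ((((P - i) + j : ℕ) : ℤ) - P + i) * (P.choose i : ℂ)
          * zbZ (r + i) ((((P - i) + j : ℕ) : ℤ) - P + i))
        • A ((P : ℤ) + r - ((P - i) + j : ℕ)) (β + (((P - i) + j : ℕ) : ℂ))
    have hidx : ((((P - i) + j : ℕ)) : ℤ) - P + i = (j : ℤ) := by omega
    rw [hidx, zbZ_coe, sgz_coe,
      show (P : ℤ) + r - (((P - i) + j : ℕ) : ℤ) = r + i - j by omega,
      show β + ((((P - i) + j : ℕ)) : ℂ) = ((P : ℤ) : ℂ) + β - i + j by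
        push_cast [Nat.cast_sub hiP]; ring]
    congr 1
    ring
  -- Step 4: swap the order of summation and apply the Vandermonde identity.
  have step4 : (∑ i ∈ Finset.range (P + 1), ∑ n ∈ Finset.range (P + J), H i n)
      = mS2 A (P : ℤ) r β := by
    rw [Finset.sum_comm]
    have hout : ∀ n ∈ Finset.range (P + J),
        (∑ i ∈ Finset.range (P + 1), H i n)
          = ((-1 : ℂ) ^ n * zbinom r n) • A ((P : ℤ) + r - n) (β + n) := by
      intro n _
      show (∑ i ∈ Finset.range (P + 1),
          ((-1 : ℂ) ^ ((n : ℤ) - P + i) * (P.choose i : ℂ) * zbZ (r + i) ((n : ℤ) - P + i))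
            • A ((P : ℤ) + r - n) (β + n)) = _
      rw [← Finset.sum_smul]
      congr 1
      calc (∑ i ∈ Finset.range (P + 1),
            (-1 : ℂ) ^ ((n : ℤ) - P + i) * (P.choose i : ℂ) * zbZ (r + i) ((n : ℤ) - P + i))
          = ((-1 : ℂ) ^ n * (-1 : ℂ) ^ P) * ∑ i ∈ Finset.range (P + 1),
              ((-1 : ℂ) ^ i * (P.choose i : ℂ)) * zbZ (r + i) ((n : ℤ) - P + i) := by
            rw [Finset.mul_sum]
            refine Finset.sum_congr rfl fun i _ => ?_
            rw [sgz_add, sgz_sub, sgz_coe, sgz_coe, sgz_coe]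
            ring
        _ = ((-1 : ℂ) ^ n * (-1 : ℂ) ^ P) * ((-1 : ℂ) ^ P * zbZ r (n : ℤ)) := by
            rw [V_eq' P r (n : ℤ)]
        _ = ((-1 : ℂ) ^ P * (-1 : ℂ) ^ P) * ((-1 : ℂ) ^ n * zbinom r n) := by
            rw [zbZ_coe]; ring
        _ = (-1 : ℂ) ^ n * zbinom r n := by rw [npow_neg_one_mul_self, one_mul]
    rw [Finset.sum_congr rfl hout]
    unfold mS2
    rw [finsum_bound _ (P + J) (fun n hn => by
      show ((-1 : ℂ) ^ n * zbinom r n) • A ((P : ℤ) + r - n) (β + n) = 0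
      rw [hNA _ n (by omega), smul_zero])]
  rw [step1, step2, step3, step4, sub_zero]

end Stmt2Assoc
section Stmt2MasterMain

variable {E : Type*} [AddCommGroup E] [Module ℂ E]

/-- The master lemma: the full component Jacobi identity for the action on
generalized intertwining operators, from locality and truncation. -/
lemma master {A B C : ℤ → ℂ → E} {NB : ℕ} (hB : mHB B NB) (hA : mHA A) (k : ℕ)
    (hloc : ∀ (m : ℤ) (α : ℂ),
      (∑ i ∈ Finset.range (k + 1), ((-1 : ℂ) ^ i * (k.choose i : ℂ)) • A (m + k - i) (α + i))
        = ∑ i ∈ Finset.range (k + 1), ((-1 : ℂ) ^ i * (k.choose i : ℂ)) • B (m + k - i) (α + i))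
    (hC : ∀ (s : ℤ) (γ : ℂ), C s γ =
      (∑ᶠ j : ℕ, ((-1 : ℂ) ^ j * zbinom s j) • A (s - j) (γ + j))
        - ∑ᶠ j : ℕ, ((-1 : ℂ) ^ j * zbinom s j * (-1 : ℂ) ^ s) • B j (γ + s - j))
    (p r : ℤ) (β : ℂ) :
    mS1 C p r β = mS2 A p r β - mS3 B p r β := by
  -- `C` in terms of `mS2` and `mS3`.
  have hC0 : ∀ (s : ℤ) (γ : ℂ), C s γ = mS2 A 0 s γ - mS3 B 0 s γ := by
    intro s γ
    rw [hC s γ]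
    congr 1
    · exact finsum_congr fun j => by
        rw [show (0 : ℤ) + s - (j : ℤ) = s - j by ring]
    · unfold mS3
      exact (finsum_congr fun j => by
        rw [show (0 : ℤ) + (j : ℤ) = (j : ℤ) by ring]).symm
  -- extended locality.
  have extloc : ∀ (t : ℕ) (p' : ℤ) (β' : ℂ),
      mS2 A p' ((k : ℤ) + t) β' = mS3 B p' ((k : ℤ) + t) β' := by
    intro t
    induction t with
    | zero =>
      intro p' β'
      have e : (k : ℤ) + ((0 : ℕ) : ℤ) = (k : ℤ) := by push_cast; ring
      rw [e]
      exact mS2_eq_mS3_at_k k hloc p' β'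
    | succ t ih =>
      intro p' β'
      have e : (k : ℤ) + ((t + 1 : ℕ) : ℤ) = ((k : ℤ) + t) + 1 := by push_cast; ring
      rw [e, mS2_rec hA, mS3_rec hB, ih, ih]
  -- high products vanish.
  have hCk : ∀ s : ℤ, (k : ℤ) ≤ s → ∀ γ : ℂ, C s γ = 0 := by
    intro s hs γ
    have hs' : s = (k : ℤ) + ((s - k).toNat : ℕ) := by omega
    rw [hC0, hs', extloc, sub_self]
  -- the downward induction.
  have main : ∀ (m : ℕ) (r' : ℤ), (k : ℤ) - m ≤ r' → ∀ (p' : ℤ) (β' : ℂ),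
      mS1 C p' r' β' = mS2 A p' r' β' - mS3 B p' r' β' := by
    intro m
    induction m with
    | zero =>
      intro r' hr' p' β'
      have hr'' : (k : ℤ) ≤ r' := by omega
      have h1 : mS1 C p' r' β' = 0 := by
        unfold mS1
        exact finsum_vanish _ fun i => by rw [hCk (r' + i) (by omega) _, smul_zero]
      have h2 : mS2 A p' r' β' = mS3 B p' r' β' := by
        have hs' : r' = (k : ℤ) + ((r' - k).toNat : ℕ) := by omega
        rw [hs']
        exact extloc _ p' β'
      rw [h1, h2, sub_self]
    | succ m ih =>
      intro r' hr' p' β'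
      by_cases hcase : (k : ℤ) - m ≤ r'
      · exact ih r' hcase p' β'
      push_neg at hcase
      have hstep : ∀ (q : ℤ) (γ : ℂ),
          mS1 C q r' γ - (mS2 A q r' γ - mS3 B q r' γ)
            = mS1 C (q + 1) r' (γ - 1) - (mS2 A (q + 1) r' (γ - 1) - mS3 B (q + 1) r' (γ - 1)) := by
        intro q γ
        have h1 := mS1_rec hCk q r' (γ - 1)
        have h2 := mS2_rec hA q r' (γ - 1)
        have h3 := mS3_rec hB q r' (γ - 1)
        have e : (γ - 1) + 1 = γ := sub_add_cancel γ 1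
        rw [e] at h1 h2 h3
        have h0 : mS1 C q (r' + 1) (γ - 1)
            = mS2 A q (r' + 1) (γ - 1) - mS3 B q (r' + 1) (γ - 1) :=
          ih (r' + 1) (by omega) q (γ - 1)
        rw [h1, h2, h3] at h0
        -- h0 : S1(q+1) - S1(q,γ) = (S2(q+1) - S2(q,γ)) - (S3(q+1) - S3(q,γ))
        have hz : (mS1 C q r' γ - (mS2 A q r' γ - mS3 B q r' γ))
            - (mS1 C (q + 1) r' (γ - 1) - (mS2 A (q + 1) r' (γ - 1) - mS3 B (q + 1) r' (γ - 1)))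
            = -((mS1 C (q + 1) r' (γ - 1) - mS1 C q r' γ)
                - ((mS2 A (q + 1) r' (γ - 1) - mS2 A q r' γ)
                  - (mS3 B (q + 1) r' (γ - 1) - mS3 B q r' γ))) := by abel
        have hz2 : (mS1 C (q + 1) r' (γ - 1) - mS1 C q r' γ)
            - ((mS2 A (q + 1) r' (γ - 1) - mS2 A q r' γ)
              - (mS3 B (q + 1) r' (γ - 1) - mS3 B q r' γ)) = 0 :=
          sub_eq_zero_of_eq h0
        have := hz.trans (by rw [hz2, neg_zero])
        exact sub_eq_zero.mp this
      have hiter : ∀ (t : ℕ) (q : ℤ) (γ : ℂ),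
          mS1 C q r' γ - (mS2 A q r' γ - mS3 B q r' γ)
            = mS1 C (q + t) r' (γ - t) - (mS2 A (q + t) r' (γ - t) - mS3 B (q + t) r' (γ - t)) := by
        intro t
        induction t with
        | zero =>
          intro q γ
          norm_num
        | succ t iht =>
          intro q γ
          rw [hstep q γ, iht (q + 1) (γ - 1),
            show q + 1 + (t : ℤ) = q + ((t + 1 : ℕ) : ℤ) by push_cast; ring,
            show γ - 1 - (t : ℕ) = γ - ((t + 1 : ℕ) : ℂ) by push_cast; ring]
      obtain ⟨t, ht⟩ : ∃ t : ℕ, (NB : ℤ) ≤ p' + t ∧ 0 ≤ p' + t :=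
        ⟨((NB : ℤ) - p').toNat + (-p').toNat, by constructor <;> omega⟩
      have hiter' := hiter t p' β'
      set P : ℕ := (p' + (t : ℤ)).toNat with hPdef
      have hPeq : p' + (t : ℤ) = (P : ℤ) := by omega
      rw [hPeq] at hiter'
      have hS3 : mS3 B (P : ℤ) r' (β' - t) = 0 := by
        unfold mS3
        exact finsum_vanish _ fun i => by
          rw [hB ((P : ℤ) + i) (by omega) _, smul_zero]
      have hS1 : mS1 C (P : ℤ) r' (β' - t) = mS2 A (P : ℤ) r' (β' - t) :=
        massoc hB hA hC P (by omega) r' (β' - t)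
      rw [hS1, hS3, sub_zero, sub_self] at hiter'
      exact sub_eq_zero.mp hiter'
  exact main ((k : ℤ) - r).toNat r (by omega) p β

end Stmt2MasterMain
section Stmt2Glue

variable {vo : VOA V}

/-- The iterate formula: the `p = 0` instance of the Jacobi identity of an
intertwining operator. -/
lemma intw_iterate (Wa Wb Wc : WeakMod V vo)
    (I : Wa.carrier →ₗ[ℂ] ℂ → (Wb.carrier →ₗ[ℂ] Wc.carrier))
    (hI : IntwAxioms vo Wa Wb Wc I) (a : V) (u : Wa.carrier) (v : Wb.carrier)
    (r : ℤ) (β : ℂ) :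
    I (Wa.YM a r u) β v
      = (∑ᶠ j : ℕ, ((-1 : ℂ) ^ j * zbinom r j) • Wc.YM a (r - j) (I u (β + j) v))
        - ∑ᶠ j : ℕ, ((-1 : ℂ) ^ j * zbinom r j * (-1 : ℂ) ^ r) • I u (β + r - j) (Wb.YM a j v) := by
  obtain ⟨hI1, hI2, hI3⟩ := hI
  obtain ⟨NX, hNX⟩ := hI1 u v β
  obtain ⟨NY, hNY⟩ := Wb.ax.2.2.1 a v
  have h := hI3 a u v 0 r β
  have hL : (∑ᶠ i : ℕ, zbinom 0 i • I (Wa.YM a (r + i) u) (((0 : ℤ) : ℂ) + β - i) v)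
      = I (Wa.YM a r u) β v := by
    rw [finsum_eq_single _ 0 (fun i hi => by
      show zbinom 0 i • I (Wa.YM a (r + i) u) (((0 : ℤ) : ℂ) + β - i) v = 0
      rw [zbinom_nat_lt 0 i le_rfl (by exact_mod_cast Nat.pos_of_ne_zero hi), zero_smul])]
    simp [zbinom_zero']
  rw [hL] at h
  rw [h, finsum_split (fun i => (-1 : ℂ) ^ i * zbinom r i) ((-1 : ℂ) ^ r)
      (fun i => Wc.YM a (0 + r - i) (I u (β + i) v))
      (fun i => I u (β + (r : ℂ) - i) (Wb.YM a (0 + i) v))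
      NX (fun i hi => by
        show Wc.YM a (0 + r - i) (I u (β + i) v) = 0
        rw [hNX i hi, map_zero])
      NY.toNat (fun i hi => by
        show I u (β + (r : ℂ) - i) (Wb.YM a (0 + i) v) = 0
        rw [show (0 : ℤ) + (i : ℤ) = (i : ℤ) by ring, hNY i (by omega), map_zero])]
  congr 1
  · exact finsum_congr fun i => by rw [show (0 : ℤ) + r - (i : ℤ) = r - i by ring]
  · exact finsum_congr fun i => by rw [show (0 : ℤ) + (i : ℤ) = (i : ℤ) by ring]

/-- The commutator formula: the `r = 0` instance of the Jacobi identity of an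
intertwining operator. -/
lemma intw_comm (Wa Wb Wc : WeakMod V vo)
    (I : Wa.carrier →ₗ[ℂ] ℂ → (Wb.carrier →ₗ[ℂ] Wc.carrier))
    (hI : IntwAxioms vo Wa Wb Wc I) (a : V) (u : Wa.carrier) (v : Wb.carrier)
    (p : ℤ) (β : ℂ) :
    Wc.YM a p (I u β v) - I u β (Wb.YM a p v)
      = ∑ᶠ j : ℕ, zbinom p j • I (Wa.YM a j u) ((p : ℂ) + β - j) v := by
  obtain ⟨hI1, hI2, hI3⟩ := hI
  have h := hI3 a u v p 0 β
  have hR : (∑ᶠ i : ℕ, ((-1 : ℂ) ^ i * zbinom 0 i) •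
      (Wc.YM a (p + 0 - i) (I u (β + i) v)
        - ((-1 : ℂ) ^ (0 : ℤ)) • I u (β + ((0 : ℤ) : ℂ) - i) (Wb.YM a (p + i) v)))
      = Wc.YM a p (I u β v) - I u β (Wb.YM a p v) := by
    rw [finsum_eq_single _ 0 (fun i hi => by
      show ((-1 : ℂ) ^ i * zbinom 0 i) •
          (Wc.YM a (p + 0 - i) (I u (β + i) v)
            - ((-1 : ℂ) ^ (0 : ℤ)) • I u (β + ((0 : ℤ) : ℂ) - i) (Wb.YM a (p + i) v)) = 0
      rw [zbinom_nat_lt 0 i le_rfl (by exact_mod_cast Nat.pos_of_ne_zero hi), mul_zero,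
        zero_smul])]
    simp [zbinom_zero']
  rw [hR] at h
  rw [← h]
  exact finsum_congr fun i => by rw [show (0 : ℤ) + ((i : ℕ) : ℤ) = ((i : ℕ) : ℤ) from by ring]

end Stmt2Glue
section Stmt2Glue2

variable {vo : VOA V}

/-- Locality of `I(u,x)` of order `k`, where `a_n u = 0` for `n ≥ k`. -/
lemma intw_local (Wa Wb Wc : WeakMod V vo)
    (I : Wa.carrier →ₗ[ℂ] ℂ → (Wb.carrier →ₗ[ℂ] Wc.carrier))
    (hI : IntwAxioms vo Wa Wb Wc I) (a : V) (u : Wa.carrier)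
    (k : ℕ) (hk : ∀ n : ℤ, (k : ℤ) ≤ n → Wa.YM a n u = 0)
    (v : Wb.carrier) (m : ℤ) (α : ℂ) :
    (∑ i ∈ Finset.range (k + 1), ((-1 : ℂ) ^ i * (k.choose i : ℂ)) •
        Wc.YM a (m + k - i) (I u (α + i) v))
      = ∑ i ∈ Finset.range (k + 1), ((-1 : ℂ) ^ i * (k.choose i : ℂ)) •
          (I u (α + i)) (Wb.YM a (m + k - i) v) := by
  obtain ⟨NX, hNX⟩ := hI.1 u v α
  obtain ⟨NY, hNY⟩ := Wb.ax.2.2.1 a v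
  have h := hI.2.2 a u v m (k : ℤ) α
  have hL : (∑ᶠ i : ℕ, zbinom m i • I (Wa.YM a ((k : ℤ) + i) u) ((m : ℂ) + α - i) v) = 0 := by
    apply finsum_vanish
    intro i
    rw [hk ((k : ℤ) + i) (by omega), map_zero]
    show zbinom m i • (0 : ℂ → (Wb.carrier →ₗ[ℂ] Wc.carrier)) ((m : ℂ) + α - i) v = 0
    simp
  rw [hL] at h
  have h2 := h.symm
  rw [finsum_split (fun i => (-1 : ℂ) ^ i * zbinom (k : ℤ) i) ((-1 : ℂ) ^ ((k : ℕ) : ℤ))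
      (fun i => Wc.YM a (m + k - i) (I u (α + i) v))
      (fun i => I u (α + ((k : ℤ) : ℂ) - i) (Wb.YM a (m + i) v))
      NX (fun i hi => by
        show Wc.YM a (m + k - i) (I u (α + i) v) = 0
        rw [hNX i hi, map_zero])
      ((NY - m).toNat) (fun i hi => by
        show I u (α + ((k : ℤ) : ℂ) - i) (Wb.YM a (m + i) v) = 0
        rw [hNY (m + i) (by omega), map_zero])] at h2
  have h3 := sub_eq_zero.mp h2
  -- convert both sides
  have hA : (∑ᶠ i : ℕ, ((-1 : ℂ) ^ i * zbinom (k : ℤ) i) • Wc.YM a (m + k - i) (I u (α + i) v))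
      = ∑ i ∈ Finset.range (k + 1), ((-1 : ℂ) ^ i * (k.choose i : ℂ)) •
          Wc.YM a (m + k - i) (I u (α + i) v) := by
    rw [finsum_bound _ (k + 1) (fun i hi => by
      show ((-1 : ℂ) ^ i * zbinom (k : ℤ) i) • Wc.YM a (m + k - i) (I u (α + i) v) = 0
      rw [zbinom_nat_lt (k : ℤ) i (by positivity) (by exact_mod_cast hi), mul_zero, zero_smul])]
    exact Finset.sum_congr rfl fun i _ => by rw [zbinom_natCast]
  have hBf : (∑ᶠ i : ℕ, ((-1 : ℂ) ^ i * zbinom (k : ℤ) i * (-1 : ℂ) ^ ((k : ℕ) : ℤ)) •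
        I u (α + ((k : ℤ) : ℂ) - i) (Wb.YM a (m + i) v))
      = ∑ i ∈ Finset.range (k + 1), ((-1 : ℂ) ^ i * (k.choose i : ℂ)) •
          (I u (α + i)) (Wb.YM a (m + k - i) v) := by
    rw [finsum_bound _ (k + 1) (fun i hi => by
      show ((-1 : ℂ) ^ i * zbinom (k : ℤ) i * (-1 : ℂ) ^ ((k : ℕ) : ℤ)) •
          I u (α + ((k : ℤ) : ℂ) - i) (Wb.YM a (m + i) v) = 0
      rw [zbinom_nat_lt (k : ℤ) i (by positivity) (by exact_mod_cast hi), mul_zero, zero_mul,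
        zero_smul])]
    rw [← reflect_sum k (fun n γ => I u γ (Wb.YM a n v)) m α]
    apply Finset.sum_congr rfl
    intro i _
    rw [zbinom_natCast, show (((k : ℤ)) : ℂ) = ((k : ℕ) : ℂ) by push_cast; ring]
  rw [hA, hBf] at h3
  exact h3

/-- `circAct` in normalized coefficient form. -/
lemma circ_eq (Wa Wb : WeakMod V vo) (a : V) (s : ℤ)
    (Φ : SeriesSp vo Wa Wb) (γ : ℂ) (v : Wa.carrier) :
    circAct vo Wa Wb a s Φ γ v
      = (∑ᶠ j : ℕ, ((-1 : ℂ) ^ j * zbinom s j) • Wb.YM a (s - j) (Φ (γ + j) v))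
        - ∑ᶠ j : ℕ, ((-1 : ℂ) ^ j * zbinom s j * (-1 : ℂ) ^ s) • Φ (γ + s - j) (Wa.YM a j v) := by
  unfold circAct leftAct rightAct
  congr 1
  · exact finsum_congr fun j => by rw [zbinom_reflect]
  · exact finsum_congr fun j => by
      rw [show zbinom s j * (-1 : ℂ) ^ (s - (j : ℤ)) = (-1 : ℂ) ^ j * zbinom s j * (-1 : ℂ) ^ s by
        rw [sgz_sub, sgz_coe]; ring]

/-- `ω(0) ∘ Φ = Φ'`, from (G2). -/
lemma circ_omega (Wa Wb : WeakMod V vo) (Φ : SeriesSp vo Wa Wb)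
    (hΦ2 : CondG2 vo Wa Wb Φ) (α : ℂ) (w : Wa.carrier) :
    circAct vo Wa Wb vo.ω 0 Φ α w = (-α) • Φ (α - 1) w := by
  rw [circ_eq]
  have e1 : (∑ᶠ j : ℕ, ((-1 : ℂ) ^ j * zbinom 0 j) • Wb.YM vo.ω ((0 : ℤ) - j) (Φ (α + j) w))
      = Wb.YM vo.ω 0 (Φ α w) := by
    rw [finsum_eq_single _ 0 (fun j hj => by
      show ((-1 : ℂ) ^ j * zbinom 0 j) • Wb.YM vo.ω ((0 : ℤ) - j) (Φ (α + j) w) = 0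
      rw [zbinom_nat_lt 0 j le_rfl (by exact_mod_cast Nat.pos_of_ne_zero hj), mul_zero,
        zero_smul])]
    simp [zbinom_zero']
  have e2 : (∑ᶠ j : ℕ, ((-1 : ℂ) ^ j * zbinom 0 j * (-1 : ℂ) ^ (0 : ℤ)) •
        Φ (α + ((0 : ℤ) : ℂ) - j) (Wa.YM vo.ω j w))
      = Φ α (Wa.YM vo.ω 0 w) := by
    rw [finsum_eq_single _ 0 (fun j hj => by
      show ((-1 : ℂ) ^ j * zbinom 0 j * (-1 : ℂ) ^ (0 : ℤ)) •
          Φ (α + ((0 : ℤ) : ℂ) - j) (Wa.YM vo.ω j w) = 0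
      rw [zbinom_nat_lt 0 j le_rfl (by exact_mod_cast Nat.pos_of_ne_zero hj), mul_zero,
        zero_mul, zero_smul])]
    simp [zbinom_zero']
  rw [e1, e2]
  exact hΦ2 α w

end Stmt2Glue2

/-- Universal property of `G(W₁,W₂)` with `F(Φ,x)u₁ = Φ(x)u₁`:
(a) every intertwining operator `I` of type `(W₂; M W₁)` factors as `I(u,x) = F(f(u),x)`
for a unique `V`-homomorphism `f : M → G(W₁,W₂)`;
(b) `Hom_V(M, G(W₁,W₂))` is naturally isomorphic to the space of intertwining operators
of type `(W₂; M W₁)`, via `f ↦ F(f(·),x)`. -/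
theorem stmt2_hom_functor_universal_property (V : Type) [AddCommGroup V] [Module ℂ V]
    (vo : VOA V) (W1 W2 : VMod V vo)
    (G : Submodule ℂ (SeriesSp vo W1.toWeakMod W2.toWeakMod))
    (hG : (G : Set (SeriesSp vo W1.toWeakMod W2.toWeakMod)) =
      {Φ | CondG1 vo W1.toWeakMod W2.toWeakMod Φ ∧ CondG2 vo W1.toWeakMod W2.toWeakMod Φ ∧
           CondG3 vo W1.toWeakMod W2.toWeakMod Φ})
    (YG : V →ₗ[ℂ] ℤ → Module.End ℂ ↥G)
    (hYG : ∀ (a : V) (m : ℤ) (Φ : ↥G) (α : ℂ) (u : W1.carrier),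
      (YG a m Φ).1 α u = circAct vo W1.toWeakMod W2.toWeakMod a m Φ.1 α u)
    (hax : WeakAxioms vo ↥G YG)
    (M : VMod V vo) :
    (∀ I : M.carrier →ₗ[ℂ] ℂ → (W1.carrier →ₗ[ℂ] W2.carrier),
      IntwAxioms vo M.toWeakMod W1.toWeakMod W2.toWeakMod I →
        ∃! f : M.carrier →ₗ[ℂ] ↥G,
          (∀ (a : V) (n : ℤ) (u : M.carrier), f (M.YM a n u) = YG a n (f u)) ∧
          ∀ (u : M.carrier) (α : ℂ) (w : W1.carrier), I u α w = (f u).1 α w) ∧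
    (∀ f : M.carrier →ₗ[ℂ] ↥G,
      (∀ (a : V) (n : ℤ) (u : M.carrier), f (M.YM a n u) = YG a n (f u)) →
        ∃! I : M.carrier →ₗ[ℂ] ℂ → (W1.carrier →ₗ[ℂ] W2.carrier),
          IntwAxioms vo M.toWeakMod W1.toWeakMod W2.toWeakMod I ∧
          ∀ (u : M.carrier) (α : ℂ) (w : W1.carrier), I u α w = (f u).1 α w) := by
  constructor
  · -- Part (a)
    intro I hI
    have hmem : ∀ u : M.carrier, I u ∈ G := by
      intro u
      rw [← SetLike.mem_coe, hG]
      refine ⟨?_, ?_, ?_⟩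
      · -- (G1)
        intro α w
        exact hI.1 u w α
      · -- (G2)
        intro α w
        have hc := intw_comm M.toWeakMod W1.toWeakMod W2.toWeakMod I hI vo.ω u w 0 α
        rw [finsum_eq_single _ 0 (fun j hj => by
          show zbinom 0 j • I (M.toWeakMod.YM vo.ω j u) (((0 : ℤ) : ℂ) + α - j) w = 0
          rw [zbinom_nat_lt 0 j le_rfl (by exact_mod_cast Nat.pos_of_ne_zero hj),
            zero_smul])] at hc
        simp only [Nat.cast_zero, Int.cast_zero, zero_add, sub_zero, zbinom_zero',
          one_smul] at hc
        rw [hc, hI.2.1 u α]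
        simp
      · -- (G3)
        intro a
        obtain ⟨N, hN⟩ := M.toWeakMod.ax.2.2.1 a u
        refine ⟨(max N 0).toNat, ?_⟩
        intro m α w
        exact intw_local M.toWeakMod W1.toWeakMod W2.toWeakMod I hI a u _
          (fun n hn => hN n (by omega)) w m α
    refine ⟨LinearMap.codRestrict G I hmem, ⟨?_, fun u α w => rfl⟩, ?_⟩
    · -- f is a homomorphism
      intro a n u
      apply Subtype.ext
      funext α
      apply LinearMap.ext
      intro w
      show I (M.YM a n u) α w = (YG a n (LinearMap.codRestrict G I hmem u)).1 α w
      rw [hYG a n (LinearMap.codRestrict G I hmem u) α w]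
      have hcirc : circAct vo W1.toWeakMod W2.toWeakMod a n
          (LinearMap.codRestrict G I hmem u).1 α w
          = circAct vo W1.toWeakMod W2.toWeakMod a n (I u) α w := rfl
      rw [hcirc, circ_eq W1.toWeakMod W2.toWeakMod a n (I u) α w]
      exact intw_iterate M.toWeakMod W1.toWeakMod W2.toWeakMod I hI a u w n α
    · -- uniqueness
      rintro f' ⟨hf'hom, hf'val⟩
      apply LinearMap.ext
      intro u
      apply Subtype.ext
      funext α
      apply LinearMap.ext
      intro w
      exact (hf'val u α w).symm
  · -- Part (b)
    intro f hf
    have hGmem : ∀ Φ : ↥G, CondG1 vo W1.toWeakMod W2.toWeakMod Φ.1 ∧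
        CondG2 vo W1.toWeakMod W2.toWeakMod Φ.1 ∧ CondG3 vo W1.toWeakMod W2.toWeakMod Φ.1 := by
      intro Φ
      have h2 := Φ.2
      rw [← SetLike.mem_coe, hG] at h2
      exact h2
    refine ⟨(Submodule.subtype G).comp f, ⟨⟨?_, ?_, ?_⟩, fun u α w => rfl⟩, ?_⟩
    · -- (I1)
      intro u v α
      exact (hGmem (f u)).1 α v
    · -- (I2)
      intro u α
      apply LinearMap.ext
      intro w
      show (f (M.YM vo.ω 0 u)).1 α w = ((-α) • (f u).1 (α - 1)) w
      rw [hf vo.ω 0 u, hYG vo.ω 0 (f u) α w,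
        circ_omega W1.toWeakMod W2.toWeakMod (f u).1 (hGmem (f u)).2.1 α w]
      simp
    · -- (I3): the Jacobi identity, via the master lemma
      intro a u v p r β
      obtain ⟨k, hk⟩ := (hGmem (f u)).2.2 a
      obtain ⟨NB', hNB'⟩ := W1.toWeakMod.ax.2.2.1 a v
      have hBm : mHB (fun mm γ => (f u).1 γ (W1.toWeakMod.YM a mm v)) (max NB' 0).toNat := by
        intro mm hmm γ
        show (f u).1 γ (W1.toWeakMod.YM a mm v) = 0
        rw [hNB' mm (by omega), map_zero]
      have hAm : mHA (fun mm γ => W2.toWeakMod.YM a mm ((f u).1 γ v)) := by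
        intro β'
        obtain ⟨N, hN⟩ := (hGmem (f u)).1 β' v
        refine ⟨N, fun mm nn hnn => ?_⟩
        show W2.toWeakMod.YM a mm ((f u).1 (β' + nn) v) = 0
        have hcast : β' + ((nn : ℤ) : ℂ) = β' + ((nn.toNat : ℕ) : ℂ) := by
          congr 1
          have h0 : ((nn.toNat : ℤ)) = nn := Int.toNat_of_nonneg (by omega)
          exact_mod_cast (congrArg (fun z : ℤ => (z : ℂ)) h0).symm
        rw [hcast, hN nn.toNat (by omega), map_zero]
      have hCm : ∀ (s : ℤ) (γ : ℂ), ((YG a s (f u)).1 γ v : W2.carrier) =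
          (∑ᶠ j : ℕ, ((-1 : ℂ) ^ j * zbinom s j) •
              W2.toWeakMod.YM a (s - j) ((f u).1 (γ + j) v))
            - ∑ᶠ j : ℕ, ((-1 : ℂ) ^ j * zbinom s j * (-1 : ℂ) ^ s) •
                (f u).1 (γ + s - j) (W1.toWeakMod.YM a j v) := by
        intro s γ
        rw [hYG a s (f u) γ v]
        exact circ_eq W1.toWeakMod W2.toWeakMod a s (f u).1 γ v
      have hm := master (C := fun s γ => (YG a s (f u)).1 γ v)
        (A := fun mm γ => W2.toWeakMod.YM a mm ((f u).1 γ v))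
        (B := fun mm γ => (f u).1 γ (W1.toWeakMod.YM a mm v))
        hBm hAm k (fun mm α => hk mm α v) hCm p r β
      have hL : (∑ᶠ i : ℕ, zbinom p i •
          ((Submodule.subtype G).comp f) (M.YM a (r + i) u) ((p : ℂ) + β - i) v)
          = mS1 (fun s γ => (YG a s (f u)).1 γ v) p r β := by
        unfold mS1
        exact finsum_congr fun i => by
          rw [show ((Submodule.subtype G).comp f) (M.YM a (r + i) u)
              = (YG a (r + i) (f u)).1 from congrArg Subtype.val (hf a (r + i) u)]
      obtain ⟨NX, hNX⟩ := (hGmem (f u)).1 β v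
      rw [hL, hm]
      rw [finsum_split (fun i => (-1 : ℂ) ^ i * zbinom r i) ((-1 : ℂ) ^ r)
        (fun i => W2.toWeakMod.YM a (p + r - i)
          (((Submodule.subtype G).comp f) u (β + i) v))
        (fun i => ((Submodule.subtype G).comp f) u (β + (r : ℂ) - i)
          (W1.toWeakMod.YM a (p + i) v))
        NX (fun i hi => by
          show W2.toWeakMod.YM a (p + r - i)
              (((Submodule.subtype G).comp f) u (β + i) v) = 0
          show W2.toWeakMod.YM a (p + r - i) ((f u).1 (β + i) v) = 0
          rw [hNX i hi, map_zero])
        ((NB' - p).toNat) (fun i hi => by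
          show ((Submodule.subtype G).comp f) u (β + (r : ℂ) - i)
              (W1.toWeakMod.YM a (p + i) v) = 0
          show (f u).1 (β + (r : ℂ) - i) (W1.toWeakMod.YM a (p + i) v) = 0
          rw [hNB' (p + i) (by omega), map_zero])]
      rfl
    · -- uniqueness of I
      rintro I' ⟨hax', hval'⟩
      apply LinearMap.ext
      intro u
      funext α
      apply LinearMap.ext
      intro w
      rw [hval' u α w]
      rfl
end
end

section
/- Let V be a vertex algebra, let M be a V-module and let z be a nonzero complex number. Then the assignment a(m)·(t^n⊗u) = Σ_{i≥0} binom(m,i) z^{m−i} (t^{m+n−i} ⊗ a_i u), for a ∈ V, u ∈ M, m,n ∈ ℤ, defines on M̂ := ℂ[t,t⁻¹]⊗M the structure of a module of level zero for the Lie algebra g(V). -/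
noncomputable section

open Finsupp TensorProduct

variable (V : Type) [AddCommGroup V] [Module ℂ V]

variable {V}

section Stmt11Aux
open Polynomial

def zb (x : ℂ) (i : ℕ) : ℂ := ((descPochhammer ℂ i).eval x) / (i.factorial : ℂ)

lemma zbinom_eq (m : ℤ) (i : ℕ) : zbinom m i = zb (m : ℂ) i := rfl

lemma smeval_int (p : Polynomial ℤ) (x : ℂ) : p.smeval x = (p.map (Int.castRingHom ℂ)).eval x := by
  rw [eval_map, ← Polynomial.eval₂_smulOneHom_eq_smeval]
  congr 1
  exact Subsingleton.elim _ _

lemma zb_eq_choose (x : ℂ) (i : ℕ) : zb x i = Ring.choose x i := by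
  have h := Ring.descPochhammer_eq_factorial_smul_choose x i
  rw [smeval_int, descPochhammer_map (Int.castRingHom ℂ)] at h
  rw [zb, h, nsmul_eq_mul, mul_div_cancel_left₀ _ (Nat.cast_ne_zero.mpr (Nat.factorial_ne_zero i))]

lemma zb_natCast (n : ℕ) (l : ℕ) : zb (n : ℂ) l = (n.choose l : ℂ) := by
  rw [zb_eq_choose, Ring.choose_natCast]

lemma zb_zero_right (x : ℂ) : zb x 0 = 1 := by simp [zb]

lemma zb_one_right (x : ℂ) : zb x 1 = x := by simp [zb, descPochhammer_one]

lemma zb_zero_left {i : ℕ} (h : i ≠ 0) : zb 0 i = 0 := by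
  rw [zb, descPochhammer_ne_zero_eval_zero (R := ℂ) h, zero_div]

lemma zb_nat_lt {i l : ℕ} (h : i < l) : zb (i : ℂ) l = 0 := by
  rw [zb_natCast, Nat.choose_eq_zero_of_lt h, Nat.cast_zero]

lemma fact_ne (i : ℕ) : (i.factorial : ℂ) ≠ 0 := Nat.cast_ne_zero.mpr (Nat.factorial_ne_zero i)

lemma zb_succ (x : ℂ) (i : ℕ) : ((i : ℂ) + 1) * zb x (i + 1) = (x - i) * zb x i := by
  have h := descPochhammer_succ_eval (S := ℂ) i x
  rw [zb, zb, h, Nat.factorial_succ]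
  have h1 := fact_ne i
  have h2 : ((i : ℂ) + 1) ≠ 0 := by
    have : ((i + 1 : ℕ) : ℂ) ≠ 0 := Nat.cast_ne_zero.mpr (Nat.succ_ne_zero i)
    push_cast at this; exact this
  push_cast
  field_simp

lemma descPoch_sub_one (i : ℕ) (x : ℂ) :
    x * (descPochhammer ℂ i).eval (x - 1) = (x - i) * (descPochhammer ℂ i).eval x := by
  induction i generalizing x with
  | zero => simp [descPochhammer_zero]
  | succ i ih =>
    rw [descPochhammer_succ_eval, descPochhammer_succ_eval]
    push_cast
    linear_combination (x - 1 - (i : ℂ)) * ih x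

lemma zb_shift (x : ℂ) (i : ℕ) : x * zb (x - 1) i = (x - i) * zb x i := by
  rw [zb, zb, ← mul_div_assoc, ← mul_div_assoc, descPoch_sub_one]

lemma zb_trinom (x : ℂ) (l s : ℕ) :
    zb x (l + s) * ((l + s).choose l : ℂ) = zb x l * zb (x - l) s := by
  have key : (descPochhammer ℂ l).eval x * (descPochhammer ℂ s).eval (x - l)
      = (descPochhammer ℂ (l + s)).eval x := by
    have h := descPochhammer_mul (R := ℂ) l s
    have := congrArg (Polynomial.eval x) h
    rwa [eval_mul, eval_comp, eval_sub, eval_X, eval_natCast] at this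
  rw [zb, zb, zb, ← key]
  have h1 := fact_ne l; have h2 := fact_ne s; have h3 := fact_ne (l + s)
  have hc : ((l+s).choose l : ℂ) * (l.factorial : ℂ) * (s.factorial : ℂ) = ((l+s).factorial : ℂ) := by
    have h := Nat.choose_mul_factorial_mul_factorial (Nat.le_add_right l s)
    rw [Nat.add_sub_cancel_left] at h
    exact_mod_cast h
  field_simp
  linear_combination ((descPochhammer ℂ l).eval x * (descPochhammer ℂ s).eval (x - l)) * hc

lemma zb_vandermonde (x y : ℂ) (k : ℕ) :
    zb (x + y) k = ∑ ij ∈ Finset.HasAntidiagonal.antidiagonal k, zb x ij.1 * zb y ij.2 := by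
  simp only [zb_eq_choose]
  exact Ring.add_choose_eq k (Commute.all x y)


section EvMod


variable {V : Type} [AddCommGroup V] [Module ℂ V]
variable {M : Type} [AddCommGroup M] [Module ℂ M]
variable (YM : V →ₗ[ℂ] ℤ → Module.End ℂ M) (z : ℂ)

def YTrunc : Prop := ∀ (a : V) (u : M), ∃ N : ℤ, ∀ n : ℤ, N ≤ n → YM a n u = 0

variable {YM}

lemma trunc_nat (htr : YTrunc YM) (a : V) (u : M) :
    ∃ N : ℕ, ∀ i : ℕ, N ≤ i → YM a i u = 0 := by
  obtain ⟨N, hN⟩ := htr a u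
  exact ⟨N.toNat, fun i hi => hN i (le_trans (Int.self_le_toNat N) (by exact_mod_cast hi))⟩

lemma finsum_eq_range {X : Type} [AddCommMonoid X] {f : ℕ → X} {N : ℕ}
    (h : ∀ i, N ≤ i → f i = 0) : ∑ᶠ i, f i = ∑ i ∈ Finset.range N, f i := by
  apply finsum_eq_sum_of_support_subset
  intro i hi
  simp only [Finset.coe_range, Set.mem_Iio]
  by_contra hlt
  exact hi (h i (not_lt.mp hlt))

lemma supp_fin {X : Type} [AddCommMonoid X] {f : ℕ → X} {N : ℕ}
    (h : ∀ i, N ≤ i → f i = 0) : (Function.support f).Finite :=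
  Set.Finite.subset (Finset.range N).finite_toSet
    (fun i hi => by
      simp only [Finset.coe_range, Set.mem_Iio]
      by_contra hlt
      exact hi (h i (not_lt.mp hlt)))

variable (YM) in
/-- the basic coefficient family -/
def evF (m n : ℤ) (a : V) (u : M) (i : ℕ) : ℤ →₀ M :=
  (zbinom m i * z ^ (m - (i : ℤ))) • Finsupp.single (m + n - (i : ℤ)) (YM a i u)

lemma evF_eq_zero {a : V} {u : M} {i : ℕ} (m n : ℤ) (h : YM a i u = 0) :
    evF YM z m n a u i = 0 := by
  rw [evF, h, Finsupp.single_zero, smul_zero]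

lemma evF_supp (htr : YTrunc YM) (m n : ℤ) (a : V) (u : M) :
    (Function.support (evF YM z m n a u)).Finite := by
  obtain ⟨N, hN⟩ := trunc_nat htr a u
  exact supp_fin (N := N) (fun i hi => evF_eq_zero z m n (hN i hi))

variable (YM) in
def evK (htr : YTrunc YM) (m n : ℤ) : V →ₗ[ℂ] M →ₗ[ℂ] (ℤ →₀ M) :=
  LinearMap.mk₂ ℂ (fun a u => ∑ᶠ i : ℕ, evF YM z m n a u i)
    (fun a b u => by
      rw [← finsum_add_distrib (evF_supp z htr m n a u) (evF_supp z htr m n b u)]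
      apply finsum_congr
      intro i
      have : YM (a + b) (i:ℤ) u = YM a (i:ℤ) u + YM b (i:ℤ) u := by rw [map_add]; rfl
      rw [evF, evF, evF, this, Finsupp.single_add, smul_add])
    (fun c a u => by
      rw [smul_finsum' c (evF_supp z htr m n a u)]
      apply finsum_congr
      intro i
      have : YM (c • a) (i:ℤ) u = c • YM a (i:ℤ) u := by rw [map_smul]; rfl
      rw [evF, evF, this, ← Finsupp.smul_single, smul_comm])
    (fun a u v => by
      rw [← finsum_add_distrib (evF_supp z htr m n a u) (evF_supp z htr m n a v)]
      apply finsum_congr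
      intro i
      rw [evF, evF, evF, map_add, Finsupp.single_add, smul_add])
    (fun c a u => by
      rw [smul_finsum' c (evF_supp z htr m n a u)]
      apply finsum_congr
      intro i
      rw [evF, evF, map_smul, ← Finsupp.smul_single, smul_comm])

variable (YM) in
/-- the evaluation representation -/
def evRho (htr : YTrunc YM) : (ℤ →₀ V) →ₗ[ℂ] Module.End ℂ (ℤ →₀ M) :=
  Finsupp.lsum ℂ (fun m =>
    { toFun := fun a => (Finsupp.lsum ℂ (fun n => evK YM z htr m n a) : (ℤ →₀ M) →ₗ[ℂ] (ℤ →₀ M))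
      map_add' := fun a b => by
        apply Finsupp.lhom_ext
        intro n u
        simp only [Finsupp.lsum_single, LinearMap.add_apply, map_add, LinearMap.add_apply]
      map_smul' := fun c a => by
        apply Finsupp.lhom_ext
        intro n u
        simp only [Finsupp.lsum_single, RingHom.id_apply, LinearMap.smul_apply, map_smul] })

lemma evRho_single (htr : YTrunc YM) (m n : ℤ) (a : V) (u : M) :
    evRho YM z htr (Finsupp.single m a) (Finsupp.single n u)
      = ∑ᶠ i : ℕ, (zbinom m i * z ^ (m - (i : ℤ))) • Finsupp.single (m + n - (i:ℤ)) (YM a i u) := by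
  simp only [evRho, Finsupp.lsum_single, LinearMap.coe_mk, AddHom.coe_mk]
  rfl

lemma evRho_single_sum (htr : YTrunc YM) (m n : ℤ) (a : V) (u : M) {N : ℕ}
    (hN : ∀ i : ℕ, N ≤ i → YM a i u = 0) :
    evRho YM z htr (Finsupp.single m a) (Finsupp.single n u)
      = ∑ i ∈ Finset.range N,
          (zbinom m i * z ^ (m - (i : ℤ))) • Finsupp.single (m + n - (i:ℤ)) (YM a i u) := by
  rw [evRho_single]
  exact finsum_eq_range (fun i hi => by rw [hN i hi, Finsupp.single_zero, smul_zero])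


end EvMod

section Cons


variable {V : Type} [AddCommGroup V] [Module ℂ V] {va : VertexAlg V}
variable {M : Type} [AddCommGroup M] [Module ℂ M]
variable {YM : V →ₗ[ℂ] ℤ → Module.End ℂ M}

lemma YM_zero (j : ℤ) (u : M) : YM (0 : V) j u = 0 := by rw [map_zero]; rfl

lemma finsum_eq_range' {X : Type} [AddCommMonoid X] {f : ℕ → X} {N : ℕ}
    (h : ∀ i, N ≤ i → f i = 0) : ∑ᶠ i, f i = ∑ i ∈ Finset.range N, f i := by
  apply finsum_eq_sum_of_support_subset
  intro i hi
  simp only [Finset.coe_range, Set.mem_Iio]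
  by_contra hlt
  exact hi (h i (not_lt.mp hlt))

lemma YM_one (hM : VAModAx V va M YM) {j : ℤ} (hj : j ≠ -1) (u : M) :
    YM va.one j u = 0 := by
  rw [hM.1 j, if_neg hj]; rfl

lemma YM_one' (hM : VAModAx V va M YM) (u : M) : YM va.one (-1) u = u := by
  rw [hM.1 (-1), if_pos rfl]; rfl

/-- `Y_M(da, x) = d/dx Y_M(a,x)` in components. -/
lemma YM_dmap (hM : VAModAx V va M YM) (a : V) (j : ℤ) (u : M) :
    YM (dmap V va a) j u = (-(j : ℂ)) • YM a (j - 1) u := by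
  have key := hM.2.2 a va.one u (j + 1) (-1) (-2)
  have hL : ∑ᶠ i : ℕ, zbinom (j+1) i • YM (va.Y a (-2 + (i:ℤ)) va.one) (j + 1 + -1 - i) u
      = YM (dmap V va a) j u + ((j:ℂ) + 1) • YM a (j - 1) u := by
    rw [finsum_eq_range' (N := 2) (fun i hi => by
      rw [va.creation_pos a (-2 + (i:ℤ)) (by omega), YM_zero, smul_zero])]
    rw [Finset.sum_range_succ, Finset.sum_range_one]
    have h0 : (-2 + ((0:ℕ):ℤ)) = (-2 : ℤ) := by norm_num
    have h1 : (-2 + ((1:ℕ):ℤ)) = (-1 : ℤ) := by norm_num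
    rw [h0, h1, va.creation a]
    have e0 : (j + 1 + -1 - ((0:ℕ):ℤ)) = j := by norm_num
    have e1 : (j + 1 + -1 - ((1:ℕ):ℤ)) = j - 1 := by norm_num
    rw [e0, e1, zbinom_eq, zbinom_eq, zb_zero_right, zb_one_right, one_smul]
    push_cast
    rfl
  have hR : ∑ᶠ i : ℕ, ((-1 : ℂ) ^ i * zbinom (-2) i) •
        (YM a (j + 1 + -2 - i) (YM va.one (-1 + i) u)
          - ((-1 : ℂ) ^ (-2 : ℤ)) • YM va.one (-1 + -2 - i) (YM a (j + 1 + i) u))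
      = YM a (j - 1) u := by
    rw [finsum_eq_range' (N := 1) (fun i hi => by
      have hx : YM va.one (-1 + (i:ℤ)) u = 0 := YM_one hM (by omega) u
      have hy : YM va.one (-1 + -2 - (i:ℤ)) (YM a (j + 1 + (i:ℤ)) u) = 0 :=
        YM_one hM (by omega) _
      rw [hx, map_zero, hy, smul_zero, sub_zero, smul_zero])]
    rw [Finset.sum_range_one]
    have e1 : (-1 + ((0:ℕ):ℤ)) = (-1 : ℤ) := by norm_num
    rw [e1, YM_one' hM]
    have hy : YM va.one (-1 + -2 - ((0:ℕ):ℤ)) (YM a (j + 1 + ((0:ℕ):ℤ)) u) = 0 :=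
      YM_one hM (by norm_num) _
    rw [hy, smul_zero, sub_zero]
    rw [pow_zero, zbinom_eq, zb_zero_right, mul_one, one_smul]
    congr 2
    push_cast
    ring
  rw [hL, hR] at key
  have h2 : YM (dmap V va a) j u = (1 - ((j:ℂ) + 1)) • YM a (j - 1) u := by
    rw [sub_smul, one_smul]
    exact eq_sub_of_add_eq key
  rw [h2]
  congr 1
  ring

/-- the commutator formula on the module -/
lemma YM_comm (hM : VAModAx V va M YM) (a b : V) (p q : ℤ) (u : M) {L : ℕ}
    (hL : ∀ l : ℕ, L ≤ l → va.Y a l b = 0) :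
    YM a p (YM b q u) - YM b q (YM a p u)
      = ∑ l ∈ Finset.range L, zbinom p l • YM (va.Y a l b) (p + q - l) u := by
  have key := hM.2.2 a b u p q 0
  have hLhs : ∑ᶠ i : ℕ, zbinom p i • YM (va.Y a (0 + (i:ℤ)) b) (p + q - i) u
      = ∑ l ∈ Finset.range L, zbinom p l • YM (va.Y a l b) (p + q - l) u := by
    rw [finsum_eq_range' (N := L) (fun i hi => by
      rw [zero_add, hL i hi, YM_zero, smul_zero])]
    apply Finset.sum_congr rfl
    intro i _
    rw [zero_add]
  have hRhs : ∑ᶠ i : ℕ, ((-1 : ℂ) ^ i * zbinom 0 i) •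
        (YM a (p + 0 - i) (YM b (q + i) u)
          - ((-1 : ℂ) ^ (0 : ℤ)) • YM b (q + 0 - i) (YM a (p + i) u))
      = YM a p (YM b q u) - YM b q (YM a p u) := by
    rw [finsum_eq_range' (N := 1) (fun i hi => by
      rw [zbinom_eq, Int.cast_zero, zb_zero_left (by omega), mul_zero, zero_smul])]
    rw [Finset.sum_range_one]
    have e0 : (p + 0 - ((0:ℕ):ℤ)) = p := by norm_num
    have e1 : (q + ((0:ℕ):ℤ)) = q := by norm_num
    have e2 : (q + 0 - ((0:ℕ):ℤ)) = q := by norm_num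
    have e3 : (p + ((0:ℕ):ℤ)) = p := by norm_num
    rw [e0, e1, e2, e3, zpow_zero, pow_zero, zbinom_eq, Int.cast_zero, zb_zero_right,
      mul_one, one_smul, one_smul]
  rw [hLhs, hRhs] at key
  exact key.symm


end Cons

section Main
variable {V : Type} [AddCommGroup V] [Module ℂ V] {va : VertexAlg V}
variable {M : Type} [AddCommGroup M] [Module ℂ M]
variable {YM : V →ₗ[ℂ] ℤ → Module.End ℂ M} (z : ℂ)

lemma zb_deriv (m : ℤ) (i : ℕ) : (m:ℂ) * zbinom (m-1) i = ((i:ℂ)+1) * zbinom m (i+1) := by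
  have h1 := zb_shift (m:ℂ) i
  have h2 := zb_succ (m:ℂ) i
  rw [zbinom_eq, zbinom_eq]
  push_cast
  rw [h2]
  exact h1

lemma evRho_vac (htr : YTrunc YM) (hM : VAModAx V va M YM) :
    evRho YM z htr (Finsupp.single (-1) va.one) = 0 := by
  apply Finsupp.lhom_ext
  intro n u
  rw [evRho_single, LinearMap.zero_apply]
  apply finsum_eq_zero_of_forall_eq_zero
  intro i
  rw [YM_one hM (by omega), Finsupp.single_zero, smul_zero]

lemma evRho_ann (htr : YTrunc YM) (hM : VAModAx V va M YM) :
    ∀ x ∈ dhatSpan V va, evRho YM z htr x = 0 := by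
  have hle : dhatSpan V va ≤ LinearMap.ker (evRho YM z htr) := by
    rw [dhatSpan, Submodule.span_le]
    rintro y ⟨m, a, rfl⟩
    rw [SetLike.mem_coe, LinearMap.mem_ker, dhatGen, map_add, map_smul]
    have hzero : ((m:ℂ) • evRho YM z htr (Finsupp.single (m-1) a)
        + evRho YM z htr (Finsupp.single m (dmap V va a))) = 0 := by
      apply Finsupp.lhom_ext
      intro n u
      obtain ⟨N, hN⟩ := trunc_nat htr a u
      have hN' : ∀ i : ℕ, N+1 ≤ i → YM (dmap V va a) (i:ℤ) u = 0 := by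
        intro i hi
        rw [YM_dmap hM]
        have e : ((i:ℤ) - 1) = ((i-1 : ℕ) : ℤ) := by omega
        rw [e, hN (i-1) (by omega), smul_zero]
      rw [LinearMap.add_apply, LinearMap.smul_apply, evRho_single_sum z htr _ _ _ _ hN,
          evRho_single_sum z htr _ _ _ _ hN', LinearMap.zero_apply]
      rw [Finset.smul_sum, Finset.sum_range_succ']
      have hf0 : (zbinom m 0 * z ^ (m - ((0:ℕ):ℤ))) •
          Finsupp.single (m + n - ((0:ℕ):ℤ)) (YM (dmap V va a) ((0:ℕ):ℤ) u) = 0 := by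
        have h00 : YM (dmap V va a) ((0:ℕ):ℤ) u = 0 := by
          rw [YM_dmap hM]; norm_num
        rw [h00, Finsupp.single_zero, smul_zero]
      rw [hf0, add_zero, ← Finset.sum_add_distrib]
      apply Finset.sum_eq_zero
      intro i _
      have ed := YM_dmap hM a ((i+1:ℕ):ℤ) u
      have e1 : (((i+1:ℕ):ℤ) - 1) = (i:ℤ) := by push_cast; ring
      have e2 : (m + n - ((i+1:ℕ):ℤ)) = (m - 1 + n - (i:ℤ)) := by push_cast; ring
      have e3 : (m - ((i+1:ℕ):ℤ)) = (m - 1 - (i:ℤ)) := by push_cast; ring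
      rw [ed, e1, e2, e3, ← Finsupp.smul_single, smul_smul, smul_smul, ← add_smul]
      have hsc : (m:ℂ) * (zbinom (m-1) i * z ^ (m - 1 - (i:ℤ)))
          + zbinom m (i+1) * z ^ (m - 1 - (i:ℤ)) * -(((i+1:ℕ):ℤ):ℂ) = 0 := by
        push_cast
        linear_combination (z ^ (m - 1 - (i:ℤ))) * zb_deriv m i
      rw [hsc, zero_smul]
    rw [hzero]
  intro x hx
  exact LinearMap.mem_ker.mp (hle hx)

lemma ytrunc_nat (a b : V) : ∃ L : ℕ, ∀ l : ℕ, L ≤ l → va.Y a l b = 0 := by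
  obtain ⟨N, hN⟩ := va.trunc a b
  exact ⟨N.toNat, fun l hl => hN l (le_trans (Int.self_le_toNat N) (by exact_mod_cast hl))⟩

lemma bound_family (htr : YTrunc YM) (c : ℕ → V) (w : ℕ → M) (K : ℕ) :
    ∃ N : ℕ, ∀ j, j < K → ∀ i : ℕ, N ≤ i → YM (c j) i (w j) = 0 := by
  induction K with
  | zero => exact ⟨0, fun j hj => absurd hj (Nat.not_lt_zero j)⟩
  | succ K ih =>
    obtain ⟨N, hN⟩ := ih
    obtain ⟨N', hN'⟩ := trunc_nat htr (c K) (w K)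
    refine ⟨max N N', fun j hj i hi => ?_⟩
    rcases Nat.lt_succ_iff_lt_or_eq.mp hj with h | h
    · exact hN j h i (le_trans (le_max_left _ _) hi)
    · subst h; exact hN' i (le_trans (le_max_right _ _) hi)

lemma zb_trinom' (m : ℤ) (l s : ℕ) :
    zbinom m (l+s) * zbinom ((l+s : ℕ) : ℤ) l = zbinom m l * zbinom (m - (l:ℤ)) s := by
  have h := zb_trinom (m:ℂ) l s
  rw [zbinom_eq, zbinom_eq, zbinom_eq, zbinom_eq]
  have hc1 : ((((l+s : ℕ) : ℤ)) : ℂ) = ((l+s : ℕ) : ℂ) := by push_cast; ring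
  have hc2 : (((m - (l:ℤ)) : ℤ) : ℂ) = (m : ℂ) - (l : ℕ) := by push_cast; ring
  rw [hc1, hc2, zb_natCast]
  exact h

lemma zbinom_vander (x y : ℤ) (k : ℕ) :
    zbinom (x + y) k = ∑ ij ∈ Finset.HasAntidiagonal.antidiagonal k, zbinom x ij.1 * zbinom y ij.2 := by
  have h := zb_vandermonde (x:ℂ) (y:ℂ) k
  rw [zbinom_eq]
  have hc : (((x + y : ℤ)) : ℂ) = (x:ℂ) + (y:ℂ) := by push_cast; ring
  rw [hc, h]
  apply Finset.sum_congr rfl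
  intro ij _
  rw [zbinom_eq, zbinom_eq]

lemma single_congr {M : Type} [AddCommGroup M] {p q : ℤ} {v w : M} (hpq : p = q) (hvw : v = w) :
    Finsupp.single p v = Finsupp.single q w := by rw [hpq, hvw]

lemma evRho_comm (hz : z ≠ 0) (htr : YTrunc YM) (hM : VAModAx V va M YM) (a b : V) (m n : ℤ) :
    evRho YM z htr (Finsupp.single m a) * evRho YM z htr (Finsupp.single n b)
      - evRho YM z htr (Finsupp.single n b) * evRho YM z htr (Finsupp.single m a)
      = ∑ᶠ i : ℕ, zbinom m i • evRho YM z htr (Finsupp.single (m + n - (i:ℤ)) (va.Y a (i:ℤ) b)) := by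
  obtain ⟨L, hL⟩ := ytrunc_nat (va := va) a b
  rw [finsum_eq_range' (N := L) (fun l hl => by
    rw [hL l hl, Finsupp.single_zero, map_zero, smul_zero])]
  apply Finsupp.lhom_ext
  intro k u
  rw [LinearMap.sub_apply, Module.End.mul_apply, Module.End.mul_apply, LinearMap.sum_apply]
  simp only [LinearMap.smul_apply]
  obtain ⟨P, hP⟩ := bound_family htr (fun l => va.Y a (l:ℤ) b) (fun _ => u) L
  obtain ⟨N1, hN1⟩ := trunc_nat htr b u
  obtain ⟨N2, hN2⟩ := trunc_nat htr a u
  obtain ⟨N4, hN4⟩ := bound_family htr (fun _ => a) (fun j => YM b (j:ℤ) u) N1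
  set I := L + P + N2 + N4 + 1 with hIdef
  obtain ⟨N5, hN5⟩ := bound_family htr (fun _ => b) (fun i => YM a (i:ℤ) u) I
  set J := P + N1 + N5 + 1 with hJdef
  set Q := I + J + P with hQdef
  have hbu : ∀ j i : ℕ, I ≤ i → YM a (i:ℤ) (YM b (j:ℤ) u) = 0 := by
    intro j i hi
    by_cases hjn : j < N1
    · exact hN4 j hjn i (by omega)
    · rw [hN1 j (by omega), map_zero]
  have hau : ∀ i j : ℕ, J ≤ j → YM b (j:ℤ) (YM a (i:ℤ) u) = 0 := by
    intro i j hj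
    by_cases hin : i < I
    · exact hN5 i hin j (by omega)
    · rw [hN2 i (by omega), map_zero]
  set W : ℕ → ℕ → ℕ → (ℤ →₀ M) := fun l s j =>
    (zbinom m l * zbinom (m - (l:ℤ)) s * zbinom n j * z ^ (m + n - (l:ℤ) - (s:ℤ) - (j:ℤ))) •
      Finsupp.single (m + n + k - (l:ℤ) - (s:ℤ) - (j:ℤ))
        (YM (va.Y a (l:ℤ) b) ((s + j : ℕ) : ℤ) u) with hWdef
  have hWzero : ∀ l s j : ℕ, l < L → P ≤ s + j → W l s j = 0 := by
    intro l s j hl hsj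
    rw [hWdef]
    simp only
    rw [hP l hl (s+j) hsj, Finsupp.single_zero, smul_zero]
  have ht1 : evRho YM z htr (Finsupp.single m a)
        (evRho YM z htr (Finsupp.single n b) (Finsupp.single k u))
      = ∑ j ∈ Finset.range J, ∑ i ∈ Finset.range I,
          ((zbinom n j * z ^ (n - (j:ℤ))) * (zbinom m i * z ^ (m - (i:ℤ)))) •
            Finsupp.single (m + (n + k - (j:ℤ)) - (i:ℤ)) (YM a (i:ℤ) (YM b (j:ℤ) u)) := by
    rw [evRho_single_sum z htr n k b u (N := J) (fun j hj => hN1 j (by omega)), map_sum]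
    apply Finset.sum_congr rfl
    intro j _
    rw [map_smul, evRho_single_sum z htr m (n + k - (j:ℤ)) a (YM b (j:ℤ) u)
      (N := I) (fun i hi => hbu j i hi), Finset.smul_sum]
    apply Finset.sum_congr rfl
    intro i _
    rw [smul_smul]
  have ht2 : evRho YM z htr (Finsupp.single n b)
        (evRho YM z htr (Finsupp.single m a) (Finsupp.single k u))
      = ∑ i ∈ Finset.range I, ∑ j ∈ Finset.range J,
          ((zbinom m i * z ^ (m - (i:ℤ))) * (zbinom n j * z ^ (n - (j:ℤ)))) •
            Finsupp.single (n + (m + k - (i:ℤ)) - (j:ℤ)) (YM b (j:ℤ) (YM a (i:ℤ) u)) := by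
    rw [evRho_single_sum z htr m k a u (N := I) (fun i hi => hN2 i (by omega)), map_sum]
    apply Finset.sum_congr rfl
    intro i _
    rw [map_smul, evRho_single_sum z htr n (m + k - (i:ℤ)) b (YM a (i:ℤ) u)
      (N := J) (fun j hj => hau i j hj), Finset.smul_sum]
    apply Finset.sum_congr rfl
    intro j _
    rw [smul_smul]
  rw [ht1, ht2, Finset.sum_comm (s := Finset.range J) (t := Finset.range I),
    ← Finset.sum_sub_distrib]
  have hcomb : ∀ i ∈ Finset.range I,
      ((∑ j ∈ Finset.range J,
          ((zbinom n j * z ^ (n - (j:ℤ))) * (zbinom m i * z ^ (m - (i:ℤ)))) •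
            Finsupp.single (m + (n + k - (j:ℤ)) - (i:ℤ)) (YM a (i:ℤ) (YM b (j:ℤ) u)))
        - (∑ j ∈ Finset.range J,
          ((zbinom m i * z ^ (m - (i:ℤ))) * (zbinom n j * z ^ (n - (j:ℤ)))) •
            Finsupp.single (n + (m + k - (i:ℤ)) - (j:ℤ)) (YM b (j:ℤ) (YM a (i:ℤ) u))))
      = ∑ l ∈ Finset.range L, ∑ j ∈ Finset.range J,
          ((zbinom m i * z ^ (m - (i:ℤ))) * (zbinom n j * z ^ (n - (j:ℤ))) * zbinom (i:ℤ) l) •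
            Finsupp.single (m + n + k - (i:ℤ) - (j:ℤ))
              (YM (va.Y a (l:ℤ) b) ((i:ℤ) + (j:ℤ) - (l:ℤ)) u) := by
    intro i _
    rw [← Finset.sum_sub_distrib]
    have hj : ∀ j ∈ Finset.range J,
        (((zbinom n j * z ^ (n - (j:ℤ))) * (zbinom m i * z ^ (m - (i:ℤ)))) •
            Finsupp.single (m + (n + k - (j:ℤ)) - (i:ℤ)) (YM a (i:ℤ) (YM b (j:ℤ) u))
          - ((zbinom m i * z ^ (m - (i:ℤ))) * (zbinom n j * z ^ (n - (j:ℤ)))) •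
            Finsupp.single (n + (m + k - (i:ℤ)) - (j:ℤ)) (YM b (j:ℤ) (YM a (i:ℤ) u)))
        = ∑ l ∈ Finset.range L,
            ((zbinom m i * z ^ (m - (i:ℤ))) * (zbinom n j * z ^ (n - (j:ℤ))) * zbinom (i:ℤ) l) •
              Finsupp.single (m + n + k - (i:ℤ) - (j:ℤ))
                (YM (va.Y a (l:ℤ) b) ((i:ℤ) + (j:ℤ) - (l:ℤ)) u) := by
      intro j _
      have e1 : m + (n + k - (j:ℤ)) - (i:ℤ) = m + n + k - (i:ℤ) - (j:ℤ) := by ring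
      have e2 : n + (m + k - (i:ℤ)) - (j:ℤ) = m + n + k - (i:ℤ) - (j:ℤ) := by ring
      rw [e1, e2, mul_comm (zbinom n j * z ^ (n - (j:ℤ))) (zbinom m i * z ^ (m - (i:ℤ))),
        ← smul_sub, ← Finsupp.single_sub, YM_comm hM a b (i:ℤ) (j:ℤ) u hL,
        ← Finsupp.lsingle_apply (R := ℂ) (m + n + k - (i:ℤ) - (j:ℤ)), map_sum, Finset.smul_sum]
      apply Finset.sum_congr rfl
      intro l _
      rw [map_smul, Finsupp.lsingle_apply, smul_smul]
    rw [Finset.sum_congr rfl hj, Finset.sum_comm]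
  rw [Finset.sum_congr rfl hcomb, Finset.sum_comm (s := Finset.range I) (t := Finset.range L)]
  apply Finset.sum_congr rfl
  intro l hlmem
  have hl : l < L := Finset.mem_range.mp hlmem
  have hLeft : (∑ i ∈ Finset.range I, ∑ j ∈ Finset.range J,
        ((zbinom m i * z ^ (m - (i:ℤ))) * (zbinom n j * z ^ (n - (j:ℤ))) * zbinom (i:ℤ) l) •
          Finsupp.single (m + n + k - (i:ℤ) - (j:ℤ))
            (YM (va.Y a (l:ℤ) b) ((i:ℤ) + (j:ℤ) - (l:ℤ)) u))
      = ∑ p ∈ Finset.range Q ×ˢ Finset.range Q, W l p.1 p.2 := by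
    have hsub : Finset.Ico l I ⊆ Finset.range I := by
      intro x hx
      rw [Finset.mem_range]
      exact (Finset.mem_Ico.mp hx).2
    have hvan : ∀ x ∈ Finset.range I, x ∉ Finset.Ico l I →
        (∑ j ∈ Finset.range J,
          ((zbinom m x * z ^ (m - (x:ℤ))) * (zbinom n j * z ^ (n - (j:ℤ))) * zbinom (x:ℤ) l) •
          Finsupp.single (m + n + k - (x:ℤ) - (j:ℤ))
            (YM (va.Y a (l:ℤ) b) ((x:ℤ) + (j:ℤ) - (l:ℤ)) u)) = 0 := by
      intro x hx hnx
      have hxl : x < l := by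
        rw [Finset.mem_range] at hx
        rw [Finset.mem_Ico] at hnx
        omega
      have hz0 : zbinom (x:ℤ) l = 0 := by
        rw [zbinom_eq, Int.cast_natCast]
        exact zb_nat_lt hxl
      apply Finset.sum_eq_zero
      intro j _
      rw [hz0, mul_zero, zero_smul]
    calc (∑ i ∈ Finset.range I, ∑ j ∈ Finset.range J,
            ((zbinom m i * z ^ (m - (i:ℤ))) * (zbinom n j * z ^ (n - (j:ℤ))) * zbinom (i:ℤ) l) •
              Finsupp.single (m + n + k - (i:ℤ) - (j:ℤ))
                (YM (va.Y a (l:ℤ) b) ((i:ℤ) + (j:ℤ) - (l:ℤ)) u))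
        = ∑ i ∈ Finset.Ico l I, ∑ j ∈ Finset.range J,
            ((zbinom m i * z ^ (m - (i:ℤ))) * (zbinom n j * z ^ (n - (j:ℤ))) * zbinom (i:ℤ) l) •
              Finsupp.single (m + n + k - (i:ℤ) - (j:ℤ))
                (YM (va.Y a (l:ℤ) b) ((i:ℤ) + (j:ℤ) - (l:ℤ)) u) :=
          (Finset.sum_subset hsub hvan).symm
      _ = ∑ s ∈ Finset.range (I - l), ∑ j ∈ Finset.range J,
            ((zbinom m (l+s) * z ^ (m - ((l+s:ℕ):ℤ))) * (zbinom n j * z ^ (n - (j:ℤ)))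
                * zbinom ((l+s:ℕ):ℤ) l) •
              Finsupp.single (m + n + k - ((l+s:ℕ):ℤ) - (j:ℤ))
                (YM (va.Y a (l:ℤ) b) (((l+s:ℕ):ℤ) + (j:ℤ) - (l:ℤ)) u) := by
          rw [Finset.sum_Ico_eq_sum_range]
      _ = ∑ s ∈ Finset.range (I - l), ∑ j ∈ Finset.range J, W l s j := by
          apply Finset.sum_congr rfl
          intro s _
          apply Finset.sum_congr rfl
          intro j _
          have ei1 : m + n + k - ((l+s:ℕ):ℤ) - (j:ℤ)
              = m + n + k - (l:ℤ) - (s:ℤ) - (j:ℤ) := by push_cast; ring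
          have ei2 : (((l+s:ℕ):ℤ) + (j:ℤ) - (l:ℤ)) = ((s+j : ℕ) : ℤ) := by push_cast; ring
          have hzz : z ^ (m - ((l+s:ℕ):ℤ)) * z ^ (n - (j:ℤ))
              = z ^ (m + n - (l:ℤ) - (s:ℤ) - (j:ℤ)) := by
            rw [← zpow_add₀ hz]
            congr 1
            push_cast
            ring
          rw [hWdef]
          simp only
          rw [single_congr ei1 (by rw [ei2])]
          congr 1
          calc (zbinom m (l+s) * z ^ (m - ((l+s:ℕ):ℤ))) * (zbinom n j * z ^ (n - (j:ℤ)))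
                  * zbinom ((l+s:ℕ):ℤ) l
              = (zbinom m (l+s) * zbinom ((l+s:ℕ):ℤ) l) * zbinom n j
                  * (z ^ (m - ((l+s:ℕ):ℤ)) * z ^ (n - (j:ℤ))) := by ring
            _ = (zbinom m l * zbinom (m - (l:ℤ)) s) * zbinom n j
                  * z ^ (m + n - (l:ℤ) - (s:ℤ) - (j:ℤ)) := by rw [zb_trinom', hzz]
            _ = zbinom m l * zbinom (m - (l:ℤ)) s * zbinom n j
                  * z ^ (m + n - (l:ℤ) - (s:ℤ) - (j:ℤ)) := by ring
      _ = ∑ p ∈ Finset.range (I - l) ×ˢ Finset.range J, W l p.1 p.2 :=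
          (Finset.sum_product' ..).symm
      _ = ∑ p ∈ Finset.range Q ×ˢ Finset.range Q, W l p.1 p.2 := by
          apply Finset.sum_subset
          · apply Finset.product_subset_product <;>
              exact Finset.range_subset_range.mpr (by omega)
          · intro p hp hnp
            rw [Finset.mem_product, Finset.mem_range, Finset.mem_range] at hp hnp
            apply hWzero _ _ _ hl
            omega
  rw [hLeft]
  -- RIGHT side
  rw [evRho_single_sum z htr (m+n-(l:ℤ)) k (va.Y a (l:ℤ) b) u (N := P) (fun t ht => hP l hl t ht),
    Finset.smul_sum]
  have hRight : ∀ j' ∈ Finset.range P,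
      zbinom m l • ((zbinom (m+n-(l:ℤ)) j' * z ^ (m+n-(l:ℤ) - (j':ℤ))) •
          Finsupp.single (m+n-(l:ℤ) + k - (j':ℤ)) (YM (va.Y a (l:ℤ) b) (j':ℤ) u))
      = ∑ p ∈ Finset.HasAntidiagonal.antidiagonal j', W l p.1 p.2 := by
    intro j' _
    have hvdm : zbinom (m+n-(l:ℤ)) j'
        = ∑ p ∈ Finset.HasAntidiagonal.antidiagonal j', zbinom (m - (l:ℤ)) p.1 * zbinom n p.2 := by
      have e : m + n - (l:ℤ) = (m - (l:ℤ)) + n := by ring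
      rw [e, zbinom_vander]
    rw [smul_smul, hvdm, Finset.sum_mul, Finset.mul_sum, Finset.sum_smul]
    apply Finset.sum_congr rfl
    intro p hp
    have hpe : p.1 + p.2 = j' := Finset.HasAntidiagonal.mem_antidiagonal.mp hp
    have ei1 : m + n - (l:ℤ) + k - (j':ℤ) = m + n + k - (l:ℤ) - (p.1:ℤ) - (p.2:ℤ) := by
      have : (j' : ℤ) = (p.1 : ℤ) + (p.2 : ℤ) := by exact_mod_cast hpe.symm
      rw [this]; ring
    have ei2 : (j' : ℤ) = ((p.1 + p.2 : ℕ) : ℤ) := by exact_mod_cast hpe.symm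
    have hzz : z ^ (m + n - (l:ℤ) - (j':ℤ))
        = z ^ (m + n - (l:ℤ) - (p.1:ℤ) - (p.2:ℤ)) := by
      congr 1
      have : (j' : ℤ) = (p.1 : ℤ) + (p.2 : ℤ) := by exact_mod_cast hpe.symm
      rw [this]; ring
    rw [hWdef]
    simp only
    rw [single_congr ei1 (by rw [ei2]), hzz]
    congr 1
    ring
  rw [Finset.sum_congr rfl hRight]
  have hdisj : (↑(Finset.range P) : Set ℕ).PairwiseDisjoint Finset.HasAntidiagonal.antidiagonal := by
    intro x _ y _ hxy
    apply Finset.disjoint_left.mpr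
    intro p hpx hpy
    exact hxy (by rw [← Finset.HasAntidiagonal.mem_antidiagonal.mp hpx, ← Finset.HasAntidiagonal.mem_antidiagonal.mp hpy])
  rw [← Finset.sum_biUnion hdisj]
  symm
  apply Finset.sum_subset
  · intro p hp
    rw [Finset.mem_biUnion] at hp
    obtain ⟨j', hj', hpj⟩ := hp
    rw [Finset.mem_range] at hj'
    have := Finset.HasAntidiagonal.mem_antidiagonal.mp hpj
    rw [Finset.mem_product, Finset.mem_range, Finset.mem_range]
    omega
  · intro p hp hnp
    apply hWzero _ _ _ hl
    by_contra hlt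
    exact hnp (Finset.mem_biUnion.mpr ⟨p.1 + p.2, Finset.mem_range.mpr (by omega),
      Finset.HasAntidiagonal.mem_antidiagonal.mpr rfl⟩)

end Main

end Stmt11Aux

/-- **Statement 11.** For a vertex algebra `V`, a `V`-module `M` and `z ∈ ℂ×`, the
assignment `a(m)·(tⁿ⊗u) = ∑_{i≥0} binom(m,i) z^{m-i} (t^{m+n-i} ⊗ aᵢu)` defines on
`M̂ = ℂ[t,t⁻¹] ⊗ M` the structure of a `g(V)`-module of level zero. -/
theorem stmt11_evaluation_loop_module (V : Type) [AddCommGroup V] [Module ℂ V]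
    (va : VertexAlg V) (M : Type) [AddCommGroup M] [Module ℂ M]
    (YM : V →ₗ[ℂ] ℤ → Module.End ℂ M) (hM : VAModAx V va M YM)
    (z : ℂ) (hz : z ≠ 0) :
    ∃ ρ : (ℤ →₀ V) →ₗ[ℂ] Module.End ℂ (ℤ →₀ M),
      (∀ (a : V) (m n : ℤ) (u : M),
        ρ (Finsupp.single m a) (Finsupp.single n u)
          = ∑ᶠ i : ℕ, (zbinom m i * z ^ (m - (i : ℤ))) •
              Finsupp.single (m + n - i) (YM a i u)) ∧
      IsGVRep V va ρ ∧
      ρ (Finsupp.single (-1) va.one) = 0 := by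
  have htr : YTrunc YM := hM.2.1
  refine ⟨evRho YM z htr, ?_, ⟨?_, ?_⟩, ?_⟩
  · intro a m n u
    exact evRho_single z htr m n a u
  · exact evRho_ann z htr hM
  · intro a b m n
    exact evRho_comm z hz htr hM a b m n
  · exact evRho_vac z htr hM
end
end
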